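/- arXiv:2508.03778 — 7 statements merged into one kernel-verified Lean document; each statement's English description precedes it below -/
import Mathlib

section
/- If G is a bipartite graph, then ρ(G) ≤ √(e(G)), where e(G) is the number of edges of G. Moreover, equality holds if and only if G is a complete bipartite graph together with some (possibly zero) isolated vertices. -/
/-!
For a real symmetric matrix the squares of the eigenvalues sum to `tr A² = 2e`. For a bipartite
graph, conjugating `A` by the diagonal `±1` matrix of the bipartition gives `-A`, so a positive
eigenvalue `μ` comes with `-μ` and `2μ² ≤ 2e`. If `μ = √e`, every other eigenvalue vanishes,
hence `A³ = e A`. Reading this at an edge `uv`, the `e` walks `u a b v` use distinct edges `ab`,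
so every edge `ab` is used: `u ~ a` and `b ~ v`, which makes the non-isolated part complete
bipartite. Conversely `K_{p,q}` has the eigenvalue `√(pq)`.
-/

open SimpleGraph

/-- The number of connected components of `G - S`. -/
noncomputable def numComp {V : Type*} (G : SimpleGraph V) (S : Set V) : ℕ :=
  Nat.card (SimpleGraph.ConnectedComponent (SimpleGraph.induce Sᶜ G))

/-- `X, Y` form a bipartition of the graph `G`. -/
def IsBipartition {V : Type*} (G : SimpleGraph V) (X Y : Set V) : Prop :=
  X ∪ Y = Set.univ ∧ Disjoint X Y ∧
    ∀ ⦃u v⦄, G.Adj u v → (u ∈ X ∧ v ∈ Y) ∨ (u ∈ Y ∧ v ∈ X)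

/-- The bipartite toughness of `G` (with parts `X`, `Y`) is at least `1`:
`c(G - S) ≤ |S|` for every proper subset `S ⊂ X` (or `S ⊂ Y`) with `c(G - S) > 1`. -/
def BTough1 {V : Type*} (G : SimpleGraph V) (X Y : Set V) : Prop :=
  ∀ S : Set V, (S ⊂ X ∨ S ⊂ Y) → 1 < numComp G S → numComp G S ≤ S.ncard

/-- The toughness of a (non-complete) graph `G`. -/
noncomputable def toughness {V : Type*} (G : SimpleGraph V) : ℝ :=
  sInf {x : ℝ | ∃ S : Set V, 1 < numComp G S ∧ x = (S.ncard : ℝ) / (numComp G S : ℝ)}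

/-- The spectral radius of `G`: the largest eigenvalue of its adjacency matrix. -/
noncomputable def specRad {V : Type*} [Fintype V] (G : SimpleGraph V) : ℝ :=
  letI := Classical.decRel G.Adj
  sSup {μ : ℝ | Module.End.HasEigenvalue (Matrix.mulVecLin (G.adjMatrix ℝ)) μ}

/-- `G` has a 2-factor: a spanning subgraph in which every vertex has degree 2. -/
def Has2Factor {V : Type*} (G : SimpleGraph V) : Prop :=
  ∃ F : SimpleGraph V, F ≤ G ∧ ∀ v, (F.neighborSet v).ncard = 2

/-- The graph `G_{n,n}`: parts `X = {u_1,…,u_n}` (left) and `Y = {v_1,…,v_n}` (right);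
`u_i ~ v_j` for all `i` and all `j ≥ 4`; moreover `v_1, v_2, v_3` are joined to `u_1`,
and `v_i` is joined to `u_{i+1}` for `1 ≤ i ≤ 3` (indices here are 0-based). -/
def Gnn (n : ℕ) : SimpleGraph (Fin n ⊕ Fin n) :=
  SimpleGraph.fromRel fun a b =>
    match a, b with
    | Sum.inl i, Sum.inr j =>
        3 ≤ (j : ℕ) ∨ ((j : ℕ) < 3 ∧ ((i : ℕ) = 0 ∨ (i : ℕ) = (j : ℕ) + 1))
    | _, _ => False

/-- The graph `M_n`: the complete graph on `{v_1,…,v_{n-3}}` (the vertices of index `< n-3`),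
together with three vertices `u_1, u_2, u_3` (the vertices of index `≥ n-3`), each joined to
`v_1` (index `0`), and `u_i` joined to `v_{i+1}` for `1 ≤ i ≤ 3`. -/
def Mn (n : ℕ) : SimpleGraph (Fin n) :=
  SimpleGraph.fromRel fun a b =>
    ((a : ℕ) < n - 3 ∧ (b : ℕ) < n - 3) ∨
      (n - 3 ≤ (a : ℕ) ∧ ((b : ℕ) = 0 ∨ (b : ℕ) = (a : ℕ) - (n - 3) + 1))


open Matrix Finset

namespace Matrix

variable {n : Type*} [Fintype n] [DecidableEq n]

theorem mem_spectrum_of_mulVec_eq {R : Type*} [Field R]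
    {A : Matrix n n R} {μ : R} {x : n → R} (hx : x ≠ 0) (h : A *ᵥ x = μ • x) :
    μ ∈ spectrum R A := by
  rw [← spectrum_toLin', ← Module.End.hasEigenvalue_iff_mem_spectrum]
  exact Module.End.hasEigenvalue_of_hasEigenvector ⟨Module.End.mem_eigenspace_iff.2 h, hx⟩

namespace IsHermitian

variable {A : Matrix n n ℝ}

theorem trace_cfc (hA : A.IsHermitian) (f : ℝ → ℝ) :
    (cfc f A).trace = ∑ i, f (hA.eigenvalues i) := by
  rw [hA.cfc_eq f, IsHermitian.cfc, Unitary.conjStarAlgAut_apply, trace_mul_cycle,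
    Unitary.coe_star_mul_self, one_mul, trace_diagonal]
  rfl

theorem sum_eigenvalues_sq (hA : A.IsHermitian) : ∑ i, hA.eigenvalues i ^ 2 = (A ^ 2).trace := by
  rw [← cfc_pow_id (R := ℝ) A 2 hA.isSelfAdjoint, hA.trace_cfc]

theorem pow_three_eq_smul (hA : A.IsHermitian) (c : ℝ)
    (h : ∀ i, hA.eigenvalues i ^ 3 = c * hA.eigenvalues i) : A ^ 3 = c • A := by
  rw [← cfc_pow_id (R := ℝ) A 3 hA.isSelfAdjoint, ← cfc_const_mul_id (R := ℝ) c A hA.isSelfAdjoint]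
  refine cfc_congr fun x hx => ?_
  rw [hA.spectrum_real_eq_range_eigenvalues] at hx
  obtain ⟨i, rfl⟩ := hx
  exact h i

theorem exists_eigenvalues_eq_of_neg_mem_spectrum (hA : A.IsHermitian) {μ : ℝ} (hμ : μ ≠ 0)
    (hpos : μ ∈ spectrum ℝ A) (hneg : -μ ∈ spectrum ℝ A) :
    ∃ i j, i ≠ j ∧ hA.eigenvalues i = μ ∧ hA.eigenvalues j = -μ := by
  rw [hA.spectrum_real_eq_range_eigenvalues] at hpos hneg
  obtain ⟨i, hi⟩ := hpos
  obtain ⟨j, hj⟩ := hneg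
  refine ⟨i, j, ?_, hi, hj⟩
  rintro rfl
  exact hμ (by linarith)

theorem two_mul_sq_le_trace_sq (hA : A.IsHermitian) {μ : ℝ} (hμ : μ ≠ 0)
    (hpos : μ ∈ spectrum ℝ A) (hneg : -μ ∈ spectrum ℝ A) : 2 * μ ^ 2 ≤ (A ^ 2).trace := by
  obtain ⟨i, j, hij, hi, hj⟩ := hA.exists_eigenvalues_eq_of_neg_mem_spectrum hμ hpos hneg
  calc 2 * μ ^ 2 = ∑ k ∈ {i, j}, hA.eigenvalues k ^ 2 := by
        rw [sum_pair hij, hi, hj]; ring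
    _ ≤ ∑ k, hA.eigenvalues k ^ 2 := sum_le_univ_sum_of_nonneg fun _ => sq_nonneg _
    _ = (A ^ 2).trace := hA.sum_eigenvalues_sq

theorem pow_three_eq_smul_of_two_mul_sq_eq_trace (hA : A.IsHermitian) {μ : ℝ} (hμ : μ ≠ 0)
    (hpos : μ ∈ spectrum ℝ A) (hneg : -μ ∈ spectrum ℝ A) (heq : 2 * μ ^ 2 = (A ^ 2).trace) :
    A ^ 3 = μ ^ 2 • A := by
  obtain ⟨i, j, hij, hi, hj⟩ := hA.exists_eigenvalues_eq_of_neg_mem_spectrum hμ hpos hneg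
  have hrest : ∑ k ∈ univ \ {i, j}, hA.eigenvalues k ^ 2 = 0 := by
    have := sum_sdiff (f := fun k => hA.eigenvalues k ^ 2) (subset_univ {i, j})
    rw [sum_pair hij, hi, hj, hA.sum_eigenvalues_sq, ← heq] at this
    linarith
  refine hA.pow_three_eq_smul _ fun k => ?_
  by_cases hk : k ∈ ({i, j} : Finset n)
  · rcases mem_insert.1 hk with rfl | hk
    · rw [hi]; ring
    · rw [mem_singleton.1 hk, hj]; ring
  · have := (sum_eq_zero_iff_of_nonneg fun _ _ => sq_nonneg _).1 hrest k (by simpa using hk)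
    rw [pow_eq_zero_iff two_ne_zero |>.1 this]; ring

end IsHermitian

end Matrix

namespace SimpleGraph

variable {V : Type*} {G : SimpleGraph V} {s t : Set V}

def IsCompleteBipartiteWith (G : SimpleGraph V) (s t : Set V) : Prop :=
  Disjoint s t ∧ ∀ u v, G.Adj u v ↔ (u ∈ s ∧ v ∈ t) ∨ (u ∈ t ∧ v ∈ s)

theorem IsCompleteBipartiteWith.symm (h : G.IsCompleteBipartiteWith s t) :
    G.IsCompleteBipartiteWith t s :=
  ⟨h.1.symm, fun u v => (h.2 u v).trans or_comm⟩

theorem IsCompleteBipartiteWith.isBipartiteWith (h : G.IsCompleteBipartiteWith s t) :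
    G.IsBipartiteWith s t :=
  ⟨h.1, fun u v huv => (h.2 u v).1 huv⟩

theorem IsBipartiteWith.notMem_iff_mem_of_adj (h : G.IsBipartiteWith s t) {u v : V}
    (huv : G.Adj u v) : u ∉ s ↔ v ∈ s := by
  rcases h.mem_of_adj huv with ⟨hu, hv⟩ | ⟨hu, hv⟩
  · simp [hu, Set.disjoint_right.1 h.disjoint hv]
  · simp [hv, Set.disjoint_right.1 h.disjoint hu]

variable [Fintype V] [DecidableRel G.Adj]

theorem sum_adjMatrix_apply (a : V) : ∑ b, G.adjMatrix ℝ a b = G.degree a := by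
  simp [adjMatrix_apply, sum_boole, ← card_neighborFinset_eq_degree, neighborFinset_eq_filter]

theorem IsCompleteBipartiteWith.neighborFinset_eq (h : G.IsCompleteBipartiteWith s t)
    [DecidablePred (· ∈ t)] {v : V} (hv : v ∈ s) :
    G.neighborFinset v = ({w | w ∈ t} : Finset V) := by
  ext w
  simp only [mem_neighborFinset, mem_filter, mem_univ, true_and, h.2]
  have := Set.disjoint_left.1 h.1 hv
  tauto

theorem IsCompleteBipartiteWith.neighborFinset_eq_empty (h : G.IsCompleteBipartiteWith s t)
    {v : V} (hs : v ∉ s) (ht : v ∉ t) : G.neighborFinset v = ∅ := by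
  ext w
  simp [mem_neighborFinset, h.2, hs, ht]

theorem IsCompleteBipartiteWith.card_edgeFinset (h : G.IsCompleteBipartiteWith s t)
    [DecidablePred (· ∈ s)] [DecidablePred (· ∈ t)] :
    #G.edgeFinset = #{v | v ∈ s} * #{v | v ∈ t} := by
  rw [← isBipartiteWith_sum_degrees_eq_card_edges (s := {v | v ∈ s}) (t := {v | v ∈ t})
    (by simpa using h.isBipartiteWith), ← smul_eq_mul, ← sum_const]
  refine sum_congr rfl fun v hv => ?_
  rw [← card_neighborFinset_eq_degree, h.neighborFinset_eq (by simpa using hv)]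

variable [DecidableEq V]

theorem specRad_eq_sSup_spectrum : specRad G = sSup (spectrum ℝ (G.adjMatrix ℝ)) := by
  rw [specRad, Subsingleton.elim (Classical.decRel G.Adj) ‹_›]
  congr 1
  ext μ
  rw [Set.mem_ofPred_eq, Module.End.hasEigenvalue_iff_mem_spectrum, ← Matrix.spectrum_toLin']
  rfl

theorem trace_adjMatrix_sq : (G.adjMatrix ℝ ^ 2).trace = 2 * #G.edgeFinset := by
  simp only [sq, Matrix.trace, Matrix.diag_apply, adjMatrix_mul_self_apply_self]
  exact_mod_cast G.sum_degrees_eq_twice_card_edges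

theorem specRad_nonneg : 0 ≤ specRad G := by
  have hA := G.isHermitian_adjMatrix ℝ
  rw [specRad_eq_sSup_spectrum, hA.spectrum_real_eq_range_eigenvalues]
  rcases isEmpty_or_nonempty V with _ | _
  · rw [Set.range_eq_empty, Real.sSup_empty]
  · obtain ⟨i, -, hi⟩ := exists_le_of_sum_le (f := 0) (g := hA.eigenvalues) univ_nonempty (by
      simpa using (hA.trace_eq_sum_eigenvalues.symm.trans (G.trace_adjMatrix ℝ)).ge)
    exact hi.trans (le_csSup (Set.finite_range _).bddAbove ⟨i, rfl⟩)

theorem IsBipartiteWith.neg_mem_spectrum_adjMatrix (h : G.IsBipartiteWith s t) {μ : ℝ}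
    (hμ : μ ∈ spectrum ℝ (G.adjMatrix ℝ)) : -μ ∈ spectrum ℝ (G.adjMatrix ℝ) := by
  classical
  let D : Matrix V V ℝ := Matrix.diagonal fun v => if v ∈ s then 1 else -1
  have hD : D * D = 1 := by
    rw [Matrix.diagonal_mul_diagonal, ← Matrix.diagonal_one]
    congr 1; ext v; split_ifs <;> norm_num
  have hconj : D * G.adjMatrix ℝ * D = -G.adjMatrix ℝ := by
    ext u v
    simp only [D, Matrix.diagonal_mul, Matrix.mul_diagonal, Matrix.neg_apply, adjMatrix_apply]
    by_cases huv : G.Adj u v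
    · have := h.notMem_iff_mem_of_adj huv
      by_cases hu : u ∈ s <;> simp_all
    · simp [huv]
  have := spectrum.units_conjugate (R := ℝ) (a := G.adjMatrix ℝ) (u := ⟨D, D, hD, hD⟩)
  rw [← this, Units.val_mk, Units.inv_mk, hconj, ← spectrum.neg_eq]
  exact Set.neg_mem_neg.2 hμ

theorem IsBipartiteWith.le_sqrt_of_mem_spectrum_adjMatrix (h : G.IsBipartiteWith s t) {μ : ℝ}
    (hμ : μ ∈ spectrum ℝ (G.adjMatrix ℝ)) : μ ≤ √(#G.edgeFinset : ℝ) := by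
  rcases le_or_gt μ 0 with hμ0 | hμ0
  · exact hμ0.trans (Real.sqrt_nonneg _)
  have := (G.isHermitian_adjMatrix ℝ).two_mul_sq_le_trace_sq hμ0.ne' hμ
    (h.neg_mem_spectrum_adjMatrix hμ)
  rw [trace_adjMatrix_sq] at this
  exact Real.le_sqrt_of_sq_le (by linarith)

theorem IsBipartiteWith.specRad_le_sqrt (h : G.IsBipartiteWith s t) :
    specRad G ≤ √(#G.edgeFinset : ℝ) := by
  rw [specRad_eq_sSup_spectrum]
  exact Real.sSup_le (fun μ hμ => h.le_sqrt_of_mem_spectrum_adjMatrix hμ) (Real.sqrt_nonneg _)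

/-- `(A³)ᵤᵥ` counts the walks `u a' b' v`; each uses a different edge `a'b'` with `a' ∈ t`, and
there are exactly `e` of those, so `(A³)ᵤᵥ = e` forces every such edge to occur. -/
theorem IsBipartiteWith.adj_of_adjMatrix_pow_three_eq (h : G.IsBipartiteWith s t)
    (h3 : G.adjMatrix ℝ ^ 3 = (#G.edgeFinset : ℝ) • G.adjMatrix ℝ)
    {u v a b : V} (hu : u ∈ s) (huv : G.Adj u v) (ha : a ∈ t) (hab : G.Adj a b) :
    G.Adj u a ∧ G.Adj b v := by
  classical
  let M := G.adjMatrix ℝ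
  let walk : V × V → ℝ := fun p => M u p.1 * M p.1 p.2 * M p.2 v
  let edge : V × V → ℝ := fun p => if p.1 ∈ t then M p.1 p.2 else 0
  have hle : ∀ p, walk p ≤ edge p := by
    rintro ⟨a', b'⟩
    by_cases h1 : G.Adj u a'
    · have := h.mem_of_mem_adj hu h1
      by_cases h2 : G.Adj a' b' <;> by_cases h3 : G.Adj b' v <;> simp [walk, edge, M, *]
    · by_cases h2 : G.Adj a' b' <;> by_cases h3 : a' ∈ t <;> simp [walk, edge, M, *]
  have hwalk : ∑ p, walk p = #G.edgeFinset := by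
    have := congrFun (congrFun h3 u) v
    simp only [pow_three, Matrix.mul_apply, mul_sum, Matrix.smul_apply] at this
    simpa [Fintype.sum_prod_type, M, huv, walk, mul_assoc] using this
  have hedge : ∑ p, edge p = #G.edgeFinset := by
    rw [Fintype.sum_prod_type]
    simp only [edge, M, sum_ite_irrel, sum_adjMatrix_apply, sum_const_zero]
    rw [← sum_filter]
    exact_mod_cast isBipartiteWith_sum_degrees_eq_card_edges' (s := {a | a ∈ s}) (by simpa using h)
  have := (sum_eq_sum_iff_of_le fun p _ => hle p).1 (hwalk.trans hedge.symm) (a, b) (mem_univ _)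
  by_contra hc
  rcases not_and_or.1 hc with hc | hc <;> simp [walk, edge, M, ha, hab, hc] at this

theorem IsBipartiteWith.adjMatrix_pow_three_eq (h : G.IsBipartiteWith s t)
    (he : 0 < #G.edgeFinset) (hmem : √(#G.edgeFinset : ℝ) ∈ spectrum ℝ (G.adjMatrix ℝ)) :
    G.adjMatrix ℝ ^ 3 = (#G.edgeFinset : ℝ) • G.adjMatrix ℝ := by
  have he' : (0 : ℝ) ≤ #G.edgeFinset := Nat.cast_nonneg _
  rw [← Real.sq_sqrt he']
  refine (G.isHermitian_adjMatrix ℝ).pow_three_eq_smul_of_two_mul_sq_eq_trace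
    (Real.sqrt_ne_zero'.2 (by exact_mod_cast he)) hmem (h.neg_mem_spectrum_adjMatrix hmem) ?_
  rw [trace_adjMatrix_sq, Real.sq_sqrt he']

theorem IsBipartiteWith.isCompleteBipartiteWith_of_adjMatrix_pow_three_eq
    (h : G.IsBipartiteWith s t)
    (h3 : G.adjMatrix ℝ ^ 3 = (#G.edgeFinset : ℝ) • G.adjMatrix ℝ) :
    G.IsCompleteBipartiteWith (s ∩ G.support) (t ∩ G.support) := by
  refine ⟨h.disjoint.mono Set.inter_subset_left Set.inter_subset_left,
    fun u v => ⟨fun huv => ?_, ?_⟩⟩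
  · rcases h.mem_of_adj huv with ⟨hu, hv⟩ | ⟨hu, hv⟩
    · exact .inl ⟨⟨hu, v, huv⟩, hv, u, huv.symm⟩
    · exact .inr ⟨⟨hu, v, huv⟩, hv, u, huv.symm⟩
  · rintro (⟨⟨hu, w, huw⟩, hv, z, hvz⟩ | ⟨⟨hu, w, huw⟩, hv, z, hvz⟩)
    · exact (h.adj_of_adjMatrix_pow_three_eq h3 hu huw hv hvz).1
    · exact (h.adj_of_adjMatrix_pow_three_eq h3 hv hvz hu huw).1.symm

theorem sqrt_mem_spectrum_of_specRad_eq (he : 0 < #G.edgeFinset)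
    (heq : specRad G = √(#G.edgeFinset : ℝ)) :
    √(#G.edgeFinset : ℝ) ∈ spectrum ℝ (G.adjMatrix ℝ) := by
  rw [specRad_eq_sSup_spectrum] at heq
  rw [← heq]
  refine Set.Nonempty.csSup_mem (Set.nonempty_iff_ne_empty.2 fun hempty => ?_)
    (Matrix.finite_spectrum _)
  rw [hempty, Real.sSup_empty, eq_comm, Real.sqrt_eq_zero (Nat.cast_nonneg _)] at heq
  exact he.ne' (by exact_mod_cast heq)

theorem IsBipartiteWith.exists_isCompleteBipartiteWith_of_specRad_eq (h : G.IsBipartiteWith s t)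
    (heq : specRad G = √(#G.edgeFinset : ℝ)) : ∃ A B, G.IsCompleteBipartiteWith A B := by
  rcases (#G.edgeFinset).eq_zero_or_pos with he | he
  · obtain rfl : G = ⊥ := edgeFinset_eq_empty.1 (card_eq_zero.1 he)
    exact ⟨∅, ∅, by simp [IsCompleteBipartiteWith]⟩
  · exact ⟨_, _, h.isCompleteBipartiteWith_of_adjMatrix_pow_three_eq
      (h.adjMatrix_pow_three_eq he (sqrt_mem_spectrum_of_specRad_eq he heq))⟩

theorem IsCompleteBipartiteWith.sqrt_mem_spectrum (h : G.IsCompleteBipartiteWith s t)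
    (he : 0 < #G.edgeFinset) : √(#G.edgeFinset : ℝ) ∈ spectrum ℝ (G.adjMatrix ℝ) := by
  classical
  set r := √(#G.edgeFinset : ℝ)
  have hr : r * r = #{v | v ∈ s} * #{v | v ∈ t} := by
    rw [Real.mul_self_sqrt (Nat.cast_nonneg _), h.card_edgeFinset]; push_cast; rfl
  let x : V → ℝ := fun v => if v ∈ s then r else if v ∈ t then #{v | v ∈ s} else 0
  have hr0 : 0 < r := Real.sqrt_pos.2 (by exact_mod_cast he)
  obtain ⟨u, hu⟩ : ∃ u, u ∈ s := by
    rw [h.card_edgeFinset] at he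
    obtain ⟨u, hu⟩ := card_pos.1 (Nat.pos_of_mul_pos_right he)
    exact ⟨u, (mem_filter.1 hu).2⟩
  refine mem_spectrum_of_mulVec_eq (x := x) (Function.ne_iff.2 ⟨u, by simp [x, hu, hr0.ne']⟩) ?_
  ext v
  rw [adjMatrix_mulVec_apply, Pi.smul_apply, smul_eq_mul]
  by_cases hs : v ∈ s
  · have hx : ∀ w ∈ ({w | w ∈ t} : Finset V), x w = #{v | v ∈ s} := fun w hw => by
      have hwt := (mem_filter.1 hw).2
      simp [x, hwt, Set.disjoint_right.1 h.1 hwt]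
    rw [h.neighborFinset_eq hs, sum_congr rfl hx, sum_const, nsmul_eq_mul]
    simp only [x, if_pos hs, hr, mul_comm]
  by_cases ht : v ∈ t
  · have hx : ∀ w ∈ ({w | w ∈ s} : Finset V), x w = r := fun w hw => by
      simp [x, (mem_filter.1 hw).2]
    rw [h.symm.neighborFinset_eq ht, sum_congr rfl hx, sum_const, nsmul_eq_mul]
    simp only [x, if_neg hs, if_pos ht, mul_comm]
  · rw [h.neighborFinset_eq_empty hs ht]
    simp [x, hs, ht]

theorem IsCompleteBipartiteWith.specRad_eq_sqrt (h : G.IsCompleteBipartiteWith s t) :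
    specRad G = √(#G.edgeFinset : ℝ) := by
  refine le_antisymm h.isBipartiteWith.specRad_le_sqrt ?_
  rcases (#G.edgeFinset).eq_zero_or_pos with he | he
  · simpa [he] using specRad_nonneg
  · rw [specRad_eq_sSup_spectrum]
    exact le_csSup (Matrix.finite_spectrum _).bddAbove (h.sqrt_mem_spectrum he)

end SimpleGraph

theorem IsBipartition.isBipartiteWith {V : Type*} {G : SimpleGraph V} {X Y : Set V}
    (h : IsBipartition G X Y) : G.IsBipartiteWith X Y :=
  ⟨h.2.1, h.2.2⟩

/-- For a bipartite graph `G`, `ρ(G) ≤ √(e(G))`, with equality if and only if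
`G` is a complete bipartite graph together with some (possibly zero) isolated vertices. -/
theorem stmt3 {V : Type*} [Fintype V] (G : SimpleGraph V)
    (X Y : Set V) (hbip : IsBipartition G X Y) :
    specRad G ≤ Real.sqrt (G.edgeSet.ncard) ∧
      (specRad G = Real.sqrt (G.edgeSet.ncard) ↔
        ∃ A B : Set V, Disjoint A B ∧
          ∀ u v : V, G.Adj u v ↔ ((u ∈ A ∧ v ∈ B) ∨ (u ∈ B ∧ v ∈ A))) := by
  classical
  have h := hbip.isBipartiteWith
  rw [← coe_edgeFinset, Set.ncard_coe_finset]
  exact ⟨h.specRad_le_sqrt, h.exists_isCompleteBipartiteWith_of_specRad_eq,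
    fun ⟨_, _, hAB⟩ => IsCompleteBipartiteWith.specRad_eq_sqrt hAB⟩
end

section
/- Let G be a balanced bipartite graph with parts X and Y, |X| = |Y| = n, and let u ∈ X and v ∈ Y be non-adjacent vertices with d_G(u) + d_G(v) ≥ n + 1. Then G contains a Hamilton cycle if and only if the graph G + uv obtained from G by adding the edge uv contains a Hamilton cycle. -/
open SimpleGraph

/-!
A Hamilton cycle of `G + uv` either avoids `uv`, and is then a Hamilton cycle of `G`, or yields a
Hamilton path `v = x₀, x₁, …, x_m = u` of `G`. If some edge `xᵢxᵢ₊₁` of this path had `xᵢ ~ u`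
and `xᵢ₊₁ ~ v`, then `v x₁ … xᵢ u x_{m-1} … xᵢ₊₁ v` would be a Hamilton cycle of `G`. Otherwise
`xᵢ ↦ xᵢ₊₁` maps the neighbours of `u`, which lie in `Y`, injectively into `X \ N(v)`, so
`d(u) ≤ |X| - d(v)`.
-/

open Walk

namespace IsBipartition

variable {V : Type*} {G : SimpleGraph V} {X Y : Set V}

theorem symm (h : IsBipartition G X Y) : IsBipartition G Y X :=
  ⟨Set.union_comm X Y ▸ h.1, h.2.1.symm, fun _ _ hab => (h.2.2 hab).symm⟩

theorem neighborSet_subset (h : IsBipartition G X Y) {a : V} (ha : a ∈ X) :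
    G.neighborSet a ⊆ Y := fun b hab => by
  rcases h.2.2 hab with ⟨-, hb⟩ | ⟨haY, -⟩
  · exact hb
  · exact absurd haY (Set.disjoint_left.mp h.2.1 ha)

end IsBipartition

namespace SimpleGraph.Walk

variable {V : Type*} [DecidableEq V] {G H : SimpleGraph V} {u v : V}

theorem IsHamiltonian.transfer {p : G.Walk u v} (hp : p.IsHamiltonian) (hH) :
    (p.transfer H hH).IsHamiltonian := fun a => by
  rw [support_transfer]
  exact hp a

theorem IsHamiltonianCycle.transfer {c : G.Walk u u} (hc : c.IsHamiltonianCycle) (hH) :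
    (c.transfer H hH).IsHamiltonianCycle := by
  rw [isHamiltonianCycle_iff_isCycle_and_support_count_tail_eq_one, support_transfer]
  exact ⟨hc.isCycle.transfer hH,
    (isHamiltonianCycle_iff_isCycle_and_support_count_tail_eq_one.mp hc).2⟩

theorem IsHamiltonianCycle.reverse {c : G.Walk u u} (hc : c.IsHamiltonianCycle) :
    c.reverse.IsHamiltonianCycle := by
  have := hc.finite
  cases nonempty_fintype V
  rw [isHamiltonianCycle_iff_isCycle_and_length_eq] at hc ⊢
  exact ⟨hc.1.reverse, by rw [length_reverse, hc.2]⟩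

omit [DecidableEq V] in
theorem IsCycle.snd_eq_or_penultimate_eq_of_mem_edges {c : G.Walk u u} (hc : c.IsCycle)
    (he : s(u, v) ∈ c.edges) : c.snd = v ∨ c.penultimate = v := by
  cases c with
  | nil => exact absurd hc not_isCycle_nil
  | cons hadj q =>
    rw [edges_cons, List.mem_cons] at he
    rcases he with he | he
    · exact Or.inl (by rw [snd_cons]; exact (Sym2.congr_right.mp he).symm)
    · have hq := ((cons_isCycle_iff q hadj).mp hc).1
      have hnil : ¬ q.Nil := edges_eq_nil.not.mp (List.ne_nil_of_mem he)
      rw [penultimate_cons_of_not_nil _ _ hnil]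
      exact Or.inr (hq.eq_penultimate_of_mem_edges he).symm

theorem IsHamiltonianCycle.exists_isHamiltonian_of_mem_edges {c : G.Walk u u}
    (hc : c.IsHamiltonianCycle) (he : s(u, v) ∈ c.edges) :
    ∃ p : G.Walk v u, p.IsHamiltonian ∧ s(u, v) ∉ p.edges := by
  suffices key : ∀ c : G.Walk u u, c.IsHamiltonianCycle → c.snd = v →
      ∃ p : G.Walk v u, p.IsHamiltonian ∧ s(u, v) ∉ p.edges by
    rcases hc.isCycle.snd_eq_or_penultimate_eq_of_mem_edges he with h | h
    · exact key c hc h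
    · exact key c.reverse hc.reverse (by rw [snd_reverse, h])
  intro c hc hsnd
  cases c with
  | nil => exact absurd hc.isCycle not_isCycle_nil
  | cons hadj q =>
    rw [snd_cons] at hsnd
    subst hsnd
    obtain ⟨hq, hqe⟩ := (cons_isCycle_iff q hadj).mp hc.isCycle
    refine ⟨q, hq.isHamiltonian_of_mem fun a => ?_, hqe⟩
    rcases List.mem_cons.mp (support_cons hadj q ▸ hc.mem_support a) with rfl | ha
    · exact q.end_mem_support
    · exact ha

omit [DecidableEq V] in
theorem edges_subset_edgeSet_of_sup_fromEdgeSet_singleton {e : Sym2 V}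
    {p : (G ⊔ fromEdgeSet {e}).Walk u v} (he : e ∉ p.edges) : ∀ e' ∈ p.edges, e' ∈ G.edgeSet :=
  fun e' he' => by
    have h := p.edges_subset_edgeSet he'
    rw [edgeSet_sup, edgeSet_fromEdgeSet] at h
    exact h.resolve_right fun h => he (Set.mem_singleton_iff.mp h.1 ▸ he')

theorem IsHamiltonian.exists_isHamiltonianCycle_of_mem_darts {p : G.Walk v u}
    (hp : p.IsHamiltonian) (huv : ¬ G.Adj u v) {d : G.Dart} (hd : d ∈ p.darts)
    (hu : G.Adj u d.fst) (hv : G.Adj v d.snd) : ∃ c : G.Walk v v, c.IsHamiltonianCycle := by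
  obtain ⟨p₁, p₂, rfl⟩ := (isSubwalk_toWalk_adj_iff_mem_darts p).mpr hd
  set P := p₂.append (cons hu p₁.reverse)
  have hP : P.IsHamiltonian := by
    have hperm : P.support.Perm ((p₁.append d.adj.toWalk).append p₂).support := by
      simp only [P, support_append, support_cons, support_reverse, List.tail_cons, support_nil,
        List.append_assoc, List.cons_append, List.nil_append, cons_tail_support]
      exact List.perm_append_comm.trans ((List.reverse_perm _).append_right _)
    exact fun a => hperm.count_eq a ▸ hp a
  have hPe : s(v, d.snd) ∉ P.edges := by
    -- a path containing the edge between its ends is that edge, which would force `d.fst = v`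
    intro he
    have hlen := hP.isPath.length_eq_one_of_mem_edges (Sym2.eq_swap ▸ he)
    simp only [P, length_append, length_cons, length_reverse] at hlen
    exact huv (eq_of_length_eq_zero (p := p₁) (by omega) ▸ hu)
  refine ⟨cons hv P, ?_⟩
  rw [isHamiltonianCycle_iff_isCycle_and_support_count_tail_eq_one, support_cons, List.tail_cons]
  exact ⟨(cons_isCycle_iff P hv).mpr ⟨hP.isPath, hPe⟩, hP⟩

end SimpleGraph.Walk

namespace IsBipartition

variable {V : Type*} {G : SimpleGraph V} {X Y : Set V}

theorem exists_mem_darts_adj_fst_adj_snd [Finite V] [DecidableEq V] (hbip : IsBipartition G X Y)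
    {u v : V} (hu : u ∈ X) (hv : v ∈ Y)
    (hdeg : X.ncard < (G.neighborSet u).ncard + (G.neighborSet v).ncard)
    {p : G.Walk v u} (hp : p.IsHamiltonian) : ∃ d ∈ p.darts, G.Adj u d.fst ∧ G.Adj v d.snd := by
  by_contra! hcross
  set D := {d : G.Dart | d ∈ p.darts ∧ G.Adj u d.fst}
  have hD : D.Finite := p.darts.finite_toSet.subset fun d hd => hd.1
  have hNu : G.neighborSet u ⊆ (fun d : G.Dart => d.fst) '' D := by
    intro y hy
    have hy' := hp.mem_support y
    rw [← map_fst_darts_append, List.mem_append, List.mem_singleton] at hy'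
    obtain ⟨d, hd, rfl⟩ := List.mem_map.mp (hy'.resolve_right (G.ne_of_adj hy).symm)
    exact ⟨d, ⟨hd, hy⟩, rfl⟩
  have hinj : Set.InjOn (fun d : G.Dart => d.snd) D := fun d₁ h₁ d₂ h₂ =>
    List.inj_on_of_nodup_map (by rw [map_snd_darts]; exact hp.isPath.support_nodup.tail) h₁.1 h₂.1
  have hmaps : ∀ d ∈ D, d.snd ∈ X \ G.neighborSet v := fun d hd =>
    ⟨hbip.symm.neighborSet_subset (hbip.neighborSet_subset hu hd.2) d.adj, hcross d hd.1 hd.2⟩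
  have hNv := hbip.symm.neighborSet_subset hv
  have : (G.neighborSet u).ncard ≤ X.ncard - (G.neighborSet v).ncard := calc
    _ ≤ ((fun d : G.Dart => d.fst) '' D).ncard := Set.ncard_le_ncard hNu (hD.image _)
    _ ≤ D.ncard := Set.ncard_image_le hD
    _ ≤ (X \ G.neighborSet v).ncard := Set.ncard_le_ncard_of_injOn _ hmaps hinj
    _ = _ := Set.ncard_sdiff hNv
  have := Set.ncard_le_ncard hNv
  omega

end IsBipartition

theorem stmt4_general {V : Type*} [Fintype V] [DecidableEq V] (n : ℕ)
    (G : SimpleGraph V) (X Y : Set V)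
    (hbip : IsBipartition G X Y) (hX : X.ncard = n)
    (u v : V) (hu : u ∈ X) (hv : v ∈ Y) (huv : ¬ G.Adj u v)
    (hdeg : n + 1 ≤ (G.neighborSet u).ncard + (G.neighborSet v).ncard) :
    G.IsHamiltonian ↔ (G ⊔ SimpleGraph.fromEdgeSet {s(u, v)}).IsHamiltonian := by
  refine ⟨fun hG => hG.mono le_sup_left, fun hG' hcard => ?_⟩
  have : Nontrivial V := ⟨u, v, hbip.2.1.ne_of_mem hu hv⟩
  obtain ⟨c, hc⟩ := hG'.exists_isHamiltonianCycle u
  by_cases huvc : s(u, v) ∈ c.edges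
  · obtain ⟨p, hp, hpe⟩ := hc.exists_isHamiltonian_of_mem_edges huvc
    have hp' := hp.transfer (edges_subset_edgeSet_of_sup_fromEdgeSet_singleton hpe)
    obtain ⟨d, hd, hud, hvd⟩ := hbip.exists_mem_darts_adj_fst_adj_snd hu hv (by omega) hp'
    exact ⟨v, hp'.exists_isHamiltonianCycle_of_mem_darts huv hd hud hvd⟩
  · exact ⟨u, _, hc.transfer (edges_subset_edgeSet_of_sup_fromEdgeSet_singleton huvc)⟩

/-- Bipartite closure step: if `u ∈ X` and `v ∈ Y` are non-adjacent with
`d(u) + d(v) ≥ n + 1` in a balanced bipartite graph with parts of size `n`, then `G` is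
Hamiltonian iff `G + uv` is Hamiltonian. -/
theorem stmt4 {V : Type*} [Fintype V] [DecidableEq V] (n : ℕ)
    (G : SimpleGraph V) (X Y : Set V)
    (hbip : IsBipartition G X Y) (hX : X.ncard = n) (hY : Y.ncard = n)
    (u v : V) (hu : u ∈ X) (hv : v ∈ Y) (huv : ¬ G.Adj u v)
    (hdeg : n + 1 ≤ (G.neighborSet u).ncard + (G.neighborSet v).ncard) :
    G.IsHamiltonian ↔ (G ⊔ SimpleGraph.fromEdgeSet {s(u, v)}).IsHamiltonian :=
  stmt4_general n G X Y hbip hX u v hu hv huv hdeg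
end

section
/- For n ≥ 5, the graph G_{n,n} is a connected balanced bipartite graph of order 2n with bipartite toughness t^B(G_{n,n}) ≥ 1. -/
open SimpleGraph

/-!
Deleting `S` from one side leaves the other side whole. If `S ⊂ X` misses `u₀` (adjacent to all
of `Y`), or `S ⊆ Y` misses some `vⱼ` with `j ≥ 3` (adjacent to all of `X`), then `G - S` is
connected. Otherwise every vertex outside the component of the hub (`v₃`, resp. `u₀`) can be
charged to a distinct vertex of `S ∖ {u₀}` (resp. `S ∖ {vₙ₋₁}`): `vⱼ` to `uⱼ₊₁`, resp. `uᵢ₊₁`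
to `vᵢ`. Sending the remaining vertex of `S` to the hub's component, this gives a surjection
from `S` onto the components.
-/

section numComp

variable {V : Type*} {G : SimpleGraph V} {S : Set V}

lemma reachable_induce_compl_of_adj {x y : V} (hx : x ∉ S) (hy : y ∉ S) (h : G.Adj x y) :
    (G.induce Sᶜ).Reachable ⟨x, hx⟩ ⟨y, hy⟩ :=
  SimpleGraph.Adj.reachable h

lemma numComp_le_one_of_forall_reachable {b : V} (hb : b ∉ S)
    (h : ∀ x (hx : x ∉ S), (G.induce Sᶜ).Reachable ⟨x, hx⟩ ⟨b, hb⟩) :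
    numComp G S ≤ 1 := by
  have hpre : (G.induce Sᶜ).Preconnected := fun x y => (h x x.2).trans (h y y.2).symm
  have := hpre.subsingleton_connectedComponent
  exact Finite.card_le_one_iff_subsingleton.2 this

lemma numComp_le_ncard_of_forall_reachable_or_eq (hS : S.Finite) {b s₀ : V} (hb : b ∉ S)
    (hs₀ : s₀ ∈ S) (φ : V → V)
    (h : ∀ x (hx : x ∉ S),
      (G.induce Sᶜ).Reachable ⟨x, hx⟩ ⟨b, hb⟩ ∨ ∃ s ∈ S, s ≠ s₀ ∧ φ s = x) :
    numComp G S ≤ S.ncard := by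
  classical
  have : Finite S := hS
  let f : S → (G.induce Sᶜ).ConnectedComponent := fun s =>
    if hs : s.1 ≠ s₀ ∧ φ s ∉ S then (G.induce Sᶜ).connectedComponentMk ⟨φ s, hs.2⟩
    else (G.induce Sᶜ).connectedComponentMk ⟨b, hb⟩
  rw [← Nat.card_coe_set_eq]
  refine Nat.card_le_card_of_surjective f fun c => ?_
  induction c using SimpleGraph.ConnectedComponent.ind with | h x => ?_
  obtain ⟨x, hx⟩ := x
  rcases h x hx with hr | ⟨s, hs, hne, rfl⟩
  · exact ⟨⟨s₀, hs₀⟩, by simpa [f] using (SimpleGraph.ConnectedComponent.sound hr).symm⟩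
  · exact ⟨⟨s, hs⟩, dif_pos ⟨hne, hx⟩⟩

end numComp

section Gnn

open Sum

variable {n : ℕ}

@[simp]
lemma gnn_adj_inl_inr (i j : Fin n) :
    (Gnn n).Adj (inl i) (inr j) ↔ 3 ≤ (j : ℕ) ∨ (j : ℕ) < 3 ∧ ((i : ℕ) = 0 ∨ (i : ℕ) = j + 1) := by
  simp [Gnn]

lemma gnn_isBipartition : IsBipartition (Gnn n) (Set.range inl) (Set.range inr) := by
  refine ⟨by ext (i | j) <;> simp, Set.disjoint_range_iff.2 fun i j => inl_ne_inr, ?_⟩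
  rintro (i | i) (j | j) h <;> simp_all [Gnn]

lemma gnn_adj_inl_zero (h0 : 0 < n) (j : Fin n) : (Gnn n).Adj (inl ⟨0, h0⟩) (inr j) := by
  rw [gnn_adj_inl_inr]
  exact (le_or_gt 3 (j : ℕ)).imp_right fun hj => ⟨hj, .inl rfl⟩

lemma gnn_adj_of_three_le (i : Fin n) {j : Fin n} (hj : 3 ≤ (j : ℕ)) :
    (Gnn n).Adj (inl i) (inr j) := by
  simp [hj]

lemma gnn_adj_of_val_eq_succ {i j : Fin n} (hj : (j : ℕ) < 3) (hij : (i : ℕ) = j + 1) :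
    (Gnn n).Adj (inl i) (inr j) := by
  simp [hj, hij]

lemma gnn_connected (hn : 3 < n) : (Gnn n).Connected := by
  have : Nonempty (Fin n ⊕ Fin n) := ⟨inl ⟨0, by omega⟩⟩
  have hub : ∀ x, (Gnn n).Reachable x (inl ⟨0, by omega⟩) := by
    rintro (i | j)
    · exact (gnn_adj_of_three_le i (j := ⟨3, hn⟩) le_rfl).reachable.trans
        (gnn_adj_inl_zero _ _).symm.reachable
    · exact (gnn_adj_inl_zero _ j).symm.reachable
  exact ⟨fun x y => (hub x).trans (hub y).symm⟩

lemma gnn_numComp_le_one_of_inl_zero_notMem (hn : 3 < n) {S : Set (Fin n ⊕ Fin n)}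
    (hS : S ⊆ Set.range inl) (h0 : inl ⟨0, by omega⟩ ∉ S) : numComp (Gnn n) S ≤ 1 := by
  have hY : ∀ j, inr j ∉ S := fun j hj => by obtain ⟨i, hi⟩ := hS hj; exact inl_ne_inr hi
  refine numComp_le_one_of_forall_reachable (hY ⟨3, hn⟩) ?_
  rintro (i | j) hx
  · exact reachable_induce_compl_of_adj _ _ (gnn_adj_of_three_le i le_rfl)
  · exact (reachable_induce_compl_of_adj hx h0 (gnn_adj_inl_zero _ j).symm).trans
      (reachable_induce_compl_of_adj _ _ (gnn_adj_of_three_le _ le_rfl))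

lemma gnn_numComp_le_ncard_of_ssubset_inl (hn : 3 < n) {S : Set (Fin n ⊕ Fin n)}
    (hS : S ⊂ Set.range inl) (hc : 1 < numComp (Gnn n) S) : numComp (Gnn n) S ≤ S.ncard := by
  have hY : ∀ j, inr j ∉ S := fun j hj => by obtain ⟨i, hi⟩ := hS.1 hj; exact inl_ne_inr hi
  have h0 : inl ⟨0, by omega⟩ ∈ S := by
    by_contra h0
    exact hc.not_ge (gnn_numComp_le_one_of_inl_zero_notMem hn hS.1 h0)
  obtain ⟨_, ⟨i₀, rfl⟩, hi₀⟩ := Set.exists_of_ssubset hS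
  refine numComp_le_ncard_of_forall_reachable_or_eq S.toFinite (hY ⟨3, hn⟩) h0
    (Sum.elim (fun i => inr ⟨i - 1, by omega⟩) inr) ?_
  rintro (i | j) hx
  · exact .inl (reachable_induce_compl_of_adj _ _ (gnn_adj_of_three_le i le_rfl))
  rcases lt_or_ge (j : ℕ) 3 with hj | hj
  · by_cases hs : inl ⟨j + 1, by omega⟩ ∈ S
    · exact .inr ⟨_, hs, by simp, by simp⟩
    · exact .inl ((reachable_induce_compl_of_adj hx hs (gnn_adj_of_val_eq_succ hj rfl).symm).trans
        (reachable_induce_compl_of_adj _ _ (gnn_adj_of_three_le _ le_rfl)))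
  · exact .inl ((reachable_induce_compl_of_adj hx hi₀ (gnn_adj_of_three_le i₀ hj).symm).trans
      (reachable_induce_compl_of_adj _ _ (gnn_adj_of_three_le _ le_rfl)))

lemma gnn_numComp_le_one_of_inr_notMem {S : Set (Fin n ⊕ Fin n)} (hS : S ⊆ Set.range inr)
    {j : Fin n} (hj : 3 ≤ (j : ℕ)) (hjS : inr j ∉ S) : numComp (Gnn n) S ≤ 1 := by
  have hX : ∀ i, inl i ∉ S := fun i hi => by obtain ⟨j, hj⟩ := hS hi; exact inr_ne_inl hj
  have h0 : 0 < n := by omega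
  refine numComp_le_one_of_forall_reachable (hX ⟨0, h0⟩) ?_
  rintro (i | k) hx
  · exact (reachable_induce_compl_of_adj hx hjS (gnn_adj_of_three_le i hj)).trans
      (reachable_induce_compl_of_adj _ _ (gnn_adj_inl_zero h0 j).symm)
  · exact reachable_induce_compl_of_adj _ _ (gnn_adj_inl_zero h0 k).symm

lemma gnn_numComp_le_ncard_of_subset_inr (hn : 3 < n) {S : Set (Fin n ⊕ Fin n)}
    (hS : S ⊆ Set.range inr) (hc : 1 < numComp (Gnn n) S) : numComp (Gnn n) S ≤ S.ncard := by
  have hX : ∀ i, inl i ∉ S := fun i hi => by obtain ⟨j, hj⟩ := hS hi; exact inr_ne_inl hj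
  have hY : ∀ j : Fin n, 3 ≤ (j : ℕ) → inr j ∈ S := fun j hj => by
    by_contra hjS
    exact hc.not_ge (gnn_numComp_le_one_of_inr_notMem hS hj hjS)
  refine numComp_le_ncard_of_forall_reachable_or_eq S.toFinite (hX ⟨0, by omega⟩)
    (hY ⟨n - 1, by omega⟩ (by simp; omega))
    (Sum.elim inl (fun j => inl ⟨(j + 1) % n, Nat.mod_lt _ (by omega)⟩)) ?_
  rintro (⟨_ | i, hi⟩ | j) hx
  · exact .inl .rfl
  · by_cases hs : inr ⟨i, by omega⟩ ∈ S
    · exact .inr ⟨_, hs, by simp; omega, by simp [Nat.mod_eq_of_lt hi]⟩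
    · have hi3 : i < 3 := by by_contra! h; exact hs (hY _ h)
      exact .inl ((reachable_induce_compl_of_adj hx hs
        (gnn_adj_of_val_eq_succ (j := ⟨i, by omega⟩) hi3 rfl)).trans
        (reachable_induce_compl_of_adj _ _ (gnn_adj_inl_zero _ _).symm))
  · exact .inl (reachable_induce_compl_of_adj _ _ (gnn_adj_inl_zero _ j).symm)

end Gnn

/-- For `n ≥ 5`, `G_{n,n}` is a connected balanced bipartite graph of order `2n`
with bipartite toughness at least `1`. -/
theorem stmt6 (n : ℕ) (hn : 5 ≤ n) :
    (Gnn n).Connected ∧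
      IsBipartition (Gnn n) (Set.range Sum.inl) (Set.range Sum.inr) ∧
      (Set.range (Sum.inl : Fin n → Fin n ⊕ Fin n)).ncard = n ∧
      (Set.range (Sum.inr : Fin n → Fin n ⊕ Fin n)).ncard = n ∧
      Fintype.card (Fin n ⊕ Fin n) = 2 * n ∧
      BTough1 (Gnn n) (Set.range Sum.inl) (Set.range Sum.inr) := by
  have hn3 : 3 < n := by omega
  refine ⟨gnn_connected hn3, gnn_isBipartition, ?_, ?_, by simp [two_mul], ?_⟩
  · simp [Set.ncard_range_of_injective Sum.inl_injective]
  · simp [Set.ncard_range_of_injective Sum.inr_injective]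
  · rintro S (hS | hS) hc
    · exact gnn_numComp_le_ncard_of_ssubset_inl hn3 hS hc
    · exact gnn_numComp_le_ncard_of_subset_inr hn3 hS.1 hc
end

section
/- For n ≥ 8, the graph M_n is a non-complete connected graph of order n with toughness t(M_n) ≥ 1, and M_n contains no Hamilton cycle. -/
open SimpleGraph

/-!
The vertices `u₁, u₂, u₃` (indices `n-3, n-2, n-1`) have degree two, so a Hamilton cycle uses both
of their edges, and their common neighbour `v₁` (index `0`) would lie on three cycle edges.

For toughness, let `S` separate `M_n`. If `S` misses a clique vertex `w`, every component of
`M_n - S` other than that of `w` is a single `uᵢ` whose neighbours `v₁` and `vᵢ₊₁` both lie in `S`;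
sending that component to `vᵢ₊₁` and the component of `w` to `v₁` embeds the components into `S`.
If `S` contains the whole clique, then `|S| ≥ n - 3 ≥ 3 ≥ |V ∖ S|`.
-/

section General

variable {V : Type*} {G : SimpleGraph V}

theorem one_le_toughness (hsep : ∃ S : Set V, 1 < numComp G S)
    (hle : ∀ S : Set V, 1 < numComp G S → numComp G S ≤ S.ncard) : 1 ≤ toughness G := by
  obtain ⟨S₀, hS₀⟩ := hsep
  refine le_csInf ⟨_, S₀, hS₀, rfl⟩ ?_
  rintro _ ⟨S, hS, rfl⟩
  have hpos : (0 : ℝ) < numComp G S := by exact_mod_cast zero_lt_one.trans hS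
  rw [le_div_iff₀ hpos, one_mul]
  exact_mod_cast hle S hS

theorem numComp_le_ncard_compl [Finite V] (S : Set V) : numComp G S ≤ Sᶜ.ncard := by
  rw [← Nat.card_coe_set_eq]
  exact Nat.card_le_card_of_surjective _ fun c => c.exists_rep

end General

namespace SimpleGraph

variable {V : Type*} {G : SimpleGraph V}

theorem Reachable.eq_of_forall_not_adj {x y : V} (h : G.Reachable x y) (hx : ∀ z, ¬ G.Adj x z) :
    x = y := by
  obtain ⟨p⟩ := h
  cases p with
  | nil => rfl
  | cons hadj _ => exact absurd hadj (hx _)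

theorem Walk.IsCycle.neighborSet_toSubgraph_eq {u v : V} {p : G.Walk u u} (hp : p.IsCycle)
    (hv : v ∈ p.support) (hdeg : (G.neighborSet v).ncard = 2) :
    p.toSubgraph.neighborSet v = G.neighborSet v :=
  Set.eq_of_subset_of_ncard_le (p.toSubgraph.neighborSet_subset v)
    (by rw [hdeg, hp.ncard_neighborSet_toSubgraph_eq_two hv])
    (Set.finite_of_ncard_ne_zero (by rw [hdeg]; norm_num))

theorem not_isHamiltonian_of_adj_of_ncard_neighborSet_eq_two [Fintype V] [DecidableEq V]
    {w : V} {U : Set V} (hU : 2 < U.ncard)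
    (hadj : ∀ u ∈ U, G.Adj w u) (hdeg : ∀ u ∈ U, (G.neighborSet u).ncard = 2) :
    ¬ G.IsHamiltonian := by
  intro hG
  have hcard : Fintype.card V ≠ 1 := by
    have := Set.ncard_le_card U
    rw [Nat.card_eq_fintype_card] at this
    omega
  obtain ⟨a, p, hp⟩ := hG hcard
  have hsub : U ⊆ p.toSubgraph.neighborSet w := fun u hu => by
    have hw : w ∈ p.toSubgraph.neighborSet u := by
      rw [hp.isCycle.neighborSet_toSubgraph_eq (hp.mem_support u) (hdeg u hu)]
      exact (hadj u hu).symm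
    exact p.toSubgraph.adj_symm hw
  have := Set.ncard_le_ncard hsub
  rw [hp.isCycle.ncard_neighborSet_toSubgraph_eq_two (hp.mem_support w)] at this
  omega

end SimpleGraph

theorem Fin.ncard_setOf_val_lt (n m : ℕ) : {a : Fin n | (a : ℕ) < m}.ncard = min n m := by
  rw [Set.ncard_eq_toFinset_card', Set.toFinset_ofPred, Fin.card_filter_val_lt]

theorem Fin.ncard_setOf_le_val (n m : ℕ) : {a : Fin n | m ≤ (a : ℕ)}.ncard = n - m := by
  have := Set.ncard_add_ncard_compl {a : Fin n | (a : ℕ) < m}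
  simp only [Nat.card_eq_fintype_card, Fintype.card_fin, Set.compl_ofPred, not_lt,
    Fin.ncard_setOf_val_lt] at this
  omega

section Mn

variable {n : ℕ}

theorem mn_adj_of_lt {a b : Fin n} (ha : (a : ℕ) < n - 3) (hb : (b : ℕ) < n - 3) (hab : a ≠ b) :
    (Mn n).Adj a b := by
  rw [Mn, fromRel_adj]
  exact ⟨hab, Or.inl (Or.inl ⟨ha, hb⟩)⟩

theorem mn_adj_zero (hn : 8 ≤ n) {a : Fin n} (ha : (a : ℕ) ≠ 0) :
    (Mn n).Adj a ⟨0, by omega⟩ := by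
  rw [Mn, fromRel_adj]
  refine ⟨fun h => ha (congrArg Fin.val h), Or.inl ?_⟩
  by_cases h : (a : ℕ) < n - 3
  · exact Or.inl ⟨h, by simp only; omega⟩
  · exact Or.inr ⟨by omega, Or.inl rfl⟩

theorem mn_neighborSet_of_le (hn : 8 ≤ n) {a : Fin n} (ha : n - 3 ≤ (a : ℕ)) :
    (Mn n).neighborSet a = {⟨0, by omega⟩, ⟨a - (n - 3) + 1, by omega⟩} := by
  ext b
  simp only [mem_neighborSet, Mn, fromRel_adj, Set.mem_insert_iff, Set.mem_singleton_iff,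
    Fin.ext_iff, ne_eq]
  have := a.isLt
  have := b.isLt
  omega

theorem mn_adj_iff_of_le (hn : 8 ≤ n) {a b : Fin n} (ha : n - 3 ≤ (a : ℕ)) :
    (Mn n).Adj a b ↔ (b : ℕ) = 0 ∨ (b : ℕ) = a - (n - 3) + 1 := by
  rw [← mem_neighborSet, mn_neighborSet_of_le hn ha]
  simp only [Set.mem_insert_iff, Set.mem_singleton_iff, Fin.ext_iff]

theorem mn_ne_top (hn : 8 ≤ n) : Mn n ≠ ⊤ := by
  intro h
  have hadj : (Mn n).Adj ⟨n - 3, by omega⟩ ⟨n - 2, by omega⟩ := by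
    rw [h]
    exact fun h' => by have := congrArg Fin.val h'; simp only at this; omega
  rw [mn_adj_iff_of_le hn le_rfl] at hadj
  simp only at hadj
  omega

theorem mn_connected (hn : 8 ≤ n) : (Mn n).Connected := by
  have hreach : ∀ v : Fin n, (Mn n).Reachable v ⟨0, by omega⟩ := fun v => by
    by_cases h : (v : ℕ) = 0
    · rw [show v = ⟨0, by omega⟩ from Fin.ext h]
    · exact (mn_adj_zero hn h).reachable
  have : Nonempty (Fin n) := ⟨⟨0, by omega⟩⟩
  exact Connected.mk fun u v => (hreach u).trans (hreach v).symm

theorem mn_not_isHamiltonian (hn : 8 ≤ n) : ¬ (Mn n).IsHamiltonian := by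
  refine not_isHamiltonian_of_adj_of_ncard_neighborSet_eq_two (w := ⟨0, by omega⟩)
    (U := {a | n - 3 ≤ (a : ℕ)}) ?_ ?_ ?_
  · rw [Fin.ncard_setOf_le_val]
    omega
  · intro u hu
    exact (mn_adj_zero hn (by simp only [Set.mem_ofPred_eq] at hu; omega)).symm
  · intro u hu
    rw [mn_neighborSet_of_le hn hu, Set.ncard_pair]
    simp only [ne_eq, Fin.ext_iff]
    omega

theorem mn_mem_of_not_reachable (hn : 8 ≤ n) {S : Set (Fin n)} {w x : Fin n} (hwS : w ∉ S)
    (hxS : x ∉ S) (hw : (w : ℕ) < n - 3)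
    (hxw : ¬ ((Mn n).induce Sᶜ).Reachable ⟨x, hxS⟩ ⟨w, hwS⟩) :
    n - 3 ≤ (x : ℕ) ∧ (⟨0, by omega⟩ : Fin n) ∈ S ∧
      (⟨x - (n - 3) + 1, by omega⟩ : Fin n) ∈ S := by
  have hlow : ∀ (y : Fin n) (hyS : y ∉ S), (y : ℕ) < n - 3 →
      ((Mn n).induce Sᶜ).Reachable ⟨y, hyS⟩ ⟨w, hwS⟩ := fun y hyS hy => by
    rcases eq_or_ne y w with rfl | hne
    · rfl
    · exact (induce_adj.2 (mn_adj_of_lt hy hw hne)).reachable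
  have hx : n - 3 ≤ (x : ℕ) := by
    by_contra h
    exact hxw (hlow x hxS (by omega))
  refine ⟨hx, ?_, ?_⟩ <;> by_contra hyS <;> refine hxw ((Adj.reachable ?_).trans (hlow _ hyS ?_))
  · exact (mn_adj_iff_of_le hn hx).2 (Or.inl rfl)
  · simp only; omega
  · exact (mn_adj_iff_of_le hn hx).2 (Or.inr rfl)
  · simp only; omega

theorem mn_numComp_le_ncard_of_not_mem (hn : 8 ≤ n) {S : Set (Fin n)} {w : Fin n} (hwS : w ∉ S)
    (hw : (w : ℕ) < n - 3) (hS : 1 < numComp (Mn n) S) : numComp (Mn n) S ≤ S.ncard := by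
  classical
  set H := (Mn n).induce Sᶜ
  set C₀ := H.connectedComponentMk ⟨w, hwS⟩
  have hrep : ∀ D : H.ConnectedComponent, D ≠ C₀ → n - 3 ≤ (D.out : ℕ) ∧
      (⟨0, by omega⟩ : Fin n) ∈ S ∧ (⟨D.out - (n - 3) + 1, by omega⟩ : Fin n) ∈ S :=
    fun D hD => mn_mem_of_not_reachable hn hwS D.out.2 hw fun h =>
      hD (D.out_eq.symm.trans (ConnectedComponent.sound h))
  obtain ⟨D₁, hD₁⟩ : ∃ D, D ≠ C₀ := by
    have : Nontrivial H.ConnectedComponent := Finite.one_lt_card_iff_nontrivial.1 hS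
    exact exists_ne C₀
  let f : H.ConnectedComponent → Fin n := fun D =>
    if D = C₀ then ⟨0, by omega⟩ else ⟨D.out - (n - 3) + 1, by omega⟩
  rw [numComp, ← Set.ncard_univ]
  refine Set.ncard_le_ncard_of_injOn f (fun D _ => ?_) (fun D _ D' _ hDD' => ?_)
  · by_cases hD : D = C₀
    · simpa only [f, if_pos hD] using (hrep D₁ hD₁).2.1
    · simpa only [f, if_neg hD] using (hrep D hD).2.2
  · by_cases hD : D = C₀ <;> by_cases hD' : D' = C₀
    · rw [hD, hD']
    · simp only [f, if_pos hD, if_neg hD', Fin.mk.injEq] at hDD'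
      omega
    · simp only [f, if_neg hD, if_pos hD', Fin.mk.injEq] at hDD'
      omega
    · simp only [f, if_neg hD, if_neg hD', Fin.mk.injEq] at hDD'
      have := (hrep D hD).1
      have := (hrep D' hD').1
      have hout : D.out = D'.out := Subtype.ext (Fin.ext (by omega))
      exact D.out_eq.symm.trans ((congrArg H.connectedComponentMk hout).trans D'.out_eq)

theorem mn_numComp_le_ncard (hn : 8 ≤ n) {S : Set (Fin n)} (hS : 1 < numComp (Mn n) S) :
    numComp (Mn n) S ≤ S.ncard := by
  by_cases hclique : ∃ w : Fin n, (w : ℕ) < n - 3 ∧ w ∉ S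
  · obtain ⟨w, hw, hwS⟩ := hclique
    exact mn_numComp_le_ncard_of_not_mem hn hwS hw hS
  · push Not at hclique
    have hS_ge : n - 3 ≤ S.ncard := by
      have := Set.ncard_le_ncard (s := {a : Fin n | (a : ℕ) < n - 3}) hclique
      rwa [Fin.ncard_setOf_val_lt, min_eq_right (Nat.sub_le n 3)] at this
    have hsum := Set.ncard_add_ncard_compl S
    rw [Nat.card_eq_fintype_card, Fintype.card_fin] at hsum
    have := numComp_le_ncard_compl (G := Mn n) S
    omega

theorem mn_one_lt_numComp (hn : 8 ≤ n) :
    1 < numComp (Mn n) {⟨0, by omega⟩, ⟨1, by omega⟩} := by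
  set S : Set (Fin n) := {⟨0, by omega⟩, ⟨1, by omega⟩}
  have hu : (⟨n - 3, by omega⟩ : Fin n) ∉ S := by
    simp only [S, Set.mem_insert_iff, Set.mem_singleton_iff, Fin.mk.injEq]
    omega
  have hv : (⟨2, by omega⟩ : Fin n) ∉ S := by
    simp only [S, Set.mem_insert_iff, Set.mem_singleton_iff, Fin.mk.injEq]
    omega
  refine Finite.one_lt_card_iff_nontrivial.2 ⟨((Mn n).induce Sᶜ).connectedComponentMk ⟨_, hu⟩,
    ((Mn n).induce Sᶜ).connectedComponentMk ⟨_, hv⟩, fun h => ?_⟩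
  have hisolated : ∀ z, ¬ ((Mn n).induce Sᶜ).Adj ⟨_, hu⟩ z := fun z hz => by
    rw [induce_adj, mn_adj_iff_of_le hn le_rfl] at hz
    dsimp only at hz
    refine z.2 ?_
    simp only [S, Set.mem_insert_iff, Set.mem_singleton_iff, Fin.ext_iff]
    omega
  have := congrArg (fun z : ↥Sᶜ => (z : ℕ))
    ((ConnectedComponent.exact h).eq_of_forall_not_adj hisolated)
  simp only at this
  omega

end Mn

/-- For `n ≥ 8`, `M_n` is a non-complete connected graph of order `n` with
toughness `t(M_n) ≥ 1`, and `M_n` has no Hamilton cycle. -/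
theorem stmt7 (n : ℕ) (hn : 8 ≤ n) :
    Mn n ≠ ⊤ ∧ (Mn n).Connected ∧ Fintype.card (Fin n) = n ∧
      1 ≤ toughness (Mn n) ∧ ¬ (Mn n).IsHamiltonian :=
  ⟨mn_ne_top hn, mn_connected hn, Fintype.card_fin n,
    one_le_toughness ⟨_, mn_one_lt_numComp hn⟩ fun _ => mn_numComp_le_ncard hn,
    mn_not_isHamiltonian hn⟩
end

section
/- Let n ≥ 7 and let H be a balanced bipartite graph with parts X = {u_1,…,u_n} and Y = {v_1,…,v_n} such that u_i is adjacent to v_j for all 1 ≤ i ≤ n and 4 ≤ j ≤ n. Suppose H contains a good linear forest, i.e., a collection of vertex-disjoint paths in H, each having both end-vertices in X and all of whose Y-vertices lie in {v_1, v_2, v_3}, whose union contains all three vertices v_1, v_2, v_3. Then H contains a Hamilton cycle. -/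
open SimpleGraph

/-!
Each of `v₁, v₂, v₃` has two forest neighbours in `X`. As the forest is acyclic and its
`X`-vertices have degree at most two, two of the `v`'s share at most one neighbour, no neighbour
is shared by all three, and the "share a neighbour" relation on `{v₁, v₂, v₃}` has no triangle
(it would give a 6-cycle). Ordering the three vertices along that relation and joining the
pieces by `v₄, v₅`, which are adjacent to all of `X`, gives a path `P` of `H` between two
vertices of `X` through `v₁, v₂, v₃`. Since `H` is bipartite, `P` has one more vertex in `X`
than in `Y`; so while some `u ∈ X` is off `P`, some `v_j ∉ P` with `j ≥ 4` extends `P` by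
`v_j u`, and once `X ⊆ P` the one remaining `v_j` closes `P` into a Hamilton cycle.
-/

open Finset

variable {α β : Type*} {H : SimpleGraph (α ⊕ β)}

lemma IsBipartition.isLeft_ne (hH : IsBipartition H (Set.range Sum.inl) (Set.range Sum.inr))
    {u v : α ⊕ β} (h : H.Adj u v) : u.isLeft ≠ v.isLeft := by
  rcases hH.2.2 h with ⟨⟨x, rfl⟩, ⟨y, rfl⟩⟩ | ⟨⟨y, rfl⟩, ⟨x, rfl⟩⟩ <;> simp

lemma IsBipartition.card_toLeft_support [DecidableEq α] [DecidableEq β]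
    (hH : IsBipartition H (Set.range Sum.inl) (Set.range Sum.inr))
    {u v : α ⊕ β} {p : H.Walk u v} (hp : p.IsPath) (hv : v.isLeft) :
    #p.support.toFinset.toLeft = #p.support.toFinset.toRight + if u.isLeft then 1 else 0 := by
  induction p with
  | @nil u =>
    rcases u with x | y
    · simp only [Walk.support_nil, List.toFinset_cons, List.toFinset_nil, toLeft_insert_inl,
        toRight_insert_inl]
      simp [toLeft, toRight]
    · simp at hv
  | @cons u w v h q ih =>
    rw [Walk.cons_isPath_iff] at hp
    have hw := hH.isLeft_ne h
    rcases u with x | y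
    · have hx : x ∉ q.support.toFinset.toLeft := by simpa using hp.2
      simp_all [card_insert_of_notMem hx]
    · have hy : y ∉ q.support.toFinset.toRight := by simpa using hp.2
      simp_all [card_insert_of_notMem hy]

section Closing

variable [Fintype α] [Fintype β] [DecidableEq α] [DecidableEq β]
  (hH : IsBipartition H (Set.range Sum.inl) (Set.range Sum.inr))
  (hcard : Fintype.card α = Fintype.card β)
include hH hcard

lemma IsBipartition.exists_inr_notMem_support {a b : α} {p : H.Walk (.inl a) (.inl b)}
    (hp : p.IsPath) : ∃ y, Sum.inr y ∉ p.support := by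
  by_contra! h
  have hR : p.support.toFinset.toRight = univ := eq_univ_of_forall (by simpa using h)
  have := hH.card_toLeft_support hp rfl
  have := card_le_univ p.support.toFinset.toLeft
  simp only [hR, card_univ, Sum.isLeft_inl, if_true] at *
  omega

lemma IsBipartition.isHamiltonian_of_forall_inl_mem_support {a b : α}
    {p : H.Walk (.inl a) (.inl b)} (hp : p.IsPath) (hab : a ≠ b) (hX : ∀ x, .inl x ∈ p.support)
    {y : β} (hy : .inr y ∉ p.support) (hya : H.Adj (.inr y) (.inl a))
    (hby : H.Adj (.inl b) (.inr y)) : H.IsHamiltonian := by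
  intro _
  refine ⟨_, .cons hya (p.concat hby), ?_⟩
  rw [Walk.isHamiltonianCycle_iff_isCycle_and_length_eq, Walk.cons_isCycle_iff]
  refine ⟨⟨hp.concat hy hby, fun he => ?_⟩, ?_⟩
  · rw [Walk.edges_concat, List.concat_eq_append, List.mem_append, List.mem_singleton,
      Sym2.eq_iff] at he
    rcases he with he | ⟨he, -⟩ | ⟨-, he⟩
    · exact hy (p.fst_mem_support_of_mem_edges he)
    · exact Sum.inr_ne_inl he
    · exact hab (Sum.inl_injective he)
  · have hL : p.support.toFinset.toLeft = univ := eq_univ_of_forall (by simpa using hX)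
    have halt := hH.card_toLeft_support hp rfl
    have hsum := card_toLeft_add_card_toRight (u := p.support.toFinset)
    rw [List.toFinset_card_of_nodup hp.support_nodup, Walk.length_support] at hsum
    rw [hL, card_univ] at halt hsum
    simp only [Walk.length_cons, Walk.length_concat, Fintype.card_sum, ← hcard]
    simp only [Sum.isLeft_inl, if_true] at halt
    omega

theorem IsBipartition.isHamiltonian_of_isPath {a b : α} {p : H.Walk (.inl a) (.inl b)}
    (hp : p.IsPath) (hab : a ≠ b)
    (hfree : ∀ x y, .inr y ∉ p.support → H.Adj (.inl x) (.inr y)) : H.IsHamiltonian := by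
  obtain ⟨k, hk⟩ : ∃ k, #(p.support.toFinset.toLeft)ᶜ = k := ⟨_, rfl⟩
  induction k generalizing b with
  | zero =>
    obtain ⟨y, hy⟩ := hH.exists_inr_notMem_support hcard hp
    refine hH.isHamiltonian_of_forall_inl_mem_support hcard hp hab (fun x => ?_) hy
      (hfree a y hy).symm (hfree b y hy)
    rw [← List.mem_toFinset, ← mem_toLeft, (compl_eq_empty_iff _).1 (card_eq_zero.1 hk)]
    exact mem_univ x
  | succ k ih =>
    obtain ⟨x, hx⟩ : ∃ x, .inl x ∉ p.support := by
      obtain ⟨x, hx⟩ := card_pos.1 (hk.trans_gt k.succ_pos)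
      exact ⟨x, by simpa using hx⟩
    obtain ⟨y, hy⟩ := hH.exists_inr_notMem_support hcard hp
    set q := (p.concat (hfree b y hy)).concat (hfree x y hy).symm
    have hq : q.support = p.support ++ [.inr y, .inl x] := by simp [q, Walk.support_concat]
    refine ih (p := q) ((hp.concat hy _).concat (by simp [Walk.support_concat, hx]) _)
      (by rintro rfl; exact hx p.start_mem_support)
      (fun x' y' h => hfree x' y' fun h' => h (by simp [hq, h'])) ?_
    have hq' : q.support.toFinset.toLeft = insert x p.support.toFinset.toLeft := by
      ext; simp [hq]
    rw [card_compl] at hk ⊢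
    rw [hq', card_insert_of_notMem (by simpa using hx)]
    omega

end Closing

def HasLeftPathThrough (H : SimpleGraph (α ⊕ β)) (S : Set β) : Prop :=
  ∃ (a b : α) (p : H.Walk (.inl a) (.inl b)), a ≠ b ∧ p.IsPath ∧ ∀ y ∈ S, .inr y ∈ p.support

lemma HasLeftPathThrough.mono {S T : Set β} (hST : S ⊆ T) (hT : HasLeftPathThrough H T) :
    HasLeftPathThrough H S :=
  let ⟨a, b, p, hab, hp, hTp⟩ := hT
  ⟨a, b, p, hab, hp, fun y hy => hTp y (hST hy)⟩

theorem HasLeftPathThrough.isHamiltonian [Fintype α] [Fintype β] [DecidableEq α] [DecidableEq β]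
    {S : Set β} (hS : HasLeftPathThrough H S)
    (hH : IsBipartition H (Set.range Sum.inl) (Set.range Sum.inr))
    (hcard : Fintype.card α = Fintype.card β)
    (hfree : ∀ x, ∀ y ∉ S, H.Adj (.inl x) (.inr y)) : H.IsHamiltonian :=
  let ⟨_, _, _, hab, hp, hSp⟩ := hS
  hH.isHamiltonian_of_isPath hcard hp hab fun x y hy => hfree x y fun h => hy (hSp y h)

lemma SimpleGraph.IsAcyclic.eq_of_isPath {V : Type*} {G : SimpleGraph V} (hG : G.IsAcyclic)
    {u v : V} {p q : G.Walk u v} (hp : p.IsPath) (hq : q.IsPath) : p = q :=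
  congrArg Subtype.val ((hG.subsingleton_path u v).elim ⟨p, hp⟩ ⟨q, hq⟩)

lemma SimpleGraph.IsAcyclic.eq_of_adj_of_adj {V : Type*} {G : SimpleGraph V} (hG : G.IsAcyclic)
    {u v v' w : V} (huw : u ≠ w) (h₁ : G.Adj u v) (h₂ : G.Adj v w) (h₁' : G.Adj u v')
    (h₂' : G.Adj v' w) : v = v' := by
  have := hG.eq_of_isPath (p := .cons h₁ (.cons h₂ .nil)) (q := .cons h₁' (.cons h₂' .nil))
    (by simp [h₁.ne, h₂.ne, huw]) (by simp [h₁'.ne, h₂'.ne, huw])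
  simpa using congrArg (·.getVert 1) this

lemma SimpleGraph.IsAcyclic.eq_of_adj_of_adj_of_adj {V : Type*} {G : SimpleGraph V}
    (hG : G.IsAcyclic) {u v w z v' w' : V} (huz : u ≠ z) (huw : u ≠ w) (hvz : v ≠ z)
    (huw' : u ≠ w') (hv'z : v' ≠ z) (h₁ : G.Adj u v) (h₂ : G.Adj v w) (h₃ : G.Adj w z)
    (h₁' : G.Adj u v') (h₂' : G.Adj v' w') (h₃' : G.Adj w' z) : w = w' := by
  have := hG.eq_of_isPath (p := .cons h₁ (.cons h₂ (.cons h₃ .nil)))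
    (q := .cons h₁' (.cons h₂' (.cons h₃' .nil)))
    (by simp [h₁.ne, h₂.ne, h₃.ne, huw, huz, hvz])
    (by simp [h₁'.ne, h₂'.ne, h₃'.ne, huw', huz, hv'z])
  simpa using congrArg (·.getVert 2) this

def leftNbrs (F : SimpleGraph (α ⊕ β)) (y : β) : Set α := {x | F.Adj (.inr y) (.inl x)}

lemma IsBipartition.ncard_neighborSet_inr {F : SimpleGraph (α ⊕ β)}
    (hH : IsBipartition H (Set.range Sum.inl) (Set.range Sum.inr)) (hFH : F ≤ H) (y : β) :
    (F.neighborSet (.inr y)).ncard = (leftNbrs F y).ncard := by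
  have : F.neighborSet (.inr y) = Sum.inl '' leftNbrs F y := by
    ext (x | y')
    · simp [leftNbrs]
    · exact iff_of_false (fun h => hH.isLeft_ne (hFH h) rfl) (by simp)
  rw [this, Set.ncard_image_of_injective _ Sum.inl_injective]

/-- `F` stands for a good linear forest, `L` for `{v₁, v₂, v₃}`. -/
structure IsGoodLinearForest (H F : SimpleGraph (α ⊕ β)) (L : Set β) : Prop where
  le : F ≤ H
  isAcyclic : F.IsAcyclic
  ncard_neighborSet_inl_le (x : α) : (F.neighborSet (.inl x)).ncard ≤ 2
  ncard_leftNbrs (y : β) : y ∈ L → (leftNbrs F y).ncard = 2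

namespace IsGoodLinearForest

variable {F : SimpleGraph (α ⊕ β)} {L : Set β} (hF : IsGoodLinearForest H F L)
include hF

lemma exists_mem_ne {y : β} (hy : y ∈ L) (x : α) : ∃ x' ∈ leftNbrs F y, x' ≠ x :=
  Set.exists_ne_of_one_lt_ncard (by rw [hF.ncard_leftNbrs y hy]; norm_num) x

lemma eq_of_mem_of_mem {i j : β} (hij : i ≠ j) {x x' : α} (hxi : x ∈ leftNbrs F i)
    (hxj : x ∈ leftNbrs F j) (hx'i : x' ∈ leftNbrs F i) (hx'j : x' ∈ leftNbrs F j) : x = x' :=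
  Sum.inl_injective <| hF.isAcyclic.eq_of_adj_of_adj (by simpa) hxi hxj.symm hx'i hx'j.symm

lemma exists_pair {y : β} (hy : y ∈ L) : ∃ a ∈ leftNbrs F y, ∃ b ∈ leftNbrs F y, a ≠ b := by
  obtain ⟨a, b, hab, h⟩ := Set.ncard_eq_two.1 (hF.ncard_leftNbrs y hy)
  exact ⟨a, by simp [h], b, by simp [h], hab⟩

lemma false_of_mem_of_mem_of_mem [Finite α] [Finite β] {i j k : β} (hij : i ≠ j) (hik : i ≠ k)
    (hjk : j ≠ k) {x : α} (hxi : x ∈ leftNbrs F i) (hxj : x ∈ leftNbrs F j)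
    (hxk : x ∈ leftNbrs F k) : False := by
  have hsub : {.inr i, .inr j, .inr k} ⊆ F.neighborSet (.inl x) := by
    rintro _ (rfl | rfl | rfl | _)
    exacts [hxi.symm, hxj.symm, hxk.symm]
  have := (Set.ncard_le_ncard hsub).trans (hF.ncard_neighborSet_inl_le x)
  rw [Set.ncard_eq_three.2 ⟨_, _, _, by simpa, by simpa, by simpa, rfl⟩] at this
  omega

lemma false_of_not_disjoint [Finite α] [Finite β] {i j k : β} (hij : i ≠ j) (hik : i ≠ k)
    (hjk : j ≠ k) (h₁ : ¬Disjoint (leftNbrs F i) (leftNbrs F j))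
    (h₂ : ¬Disjoint (leftNbrs F i) (leftNbrs F k))
    (h₃ : ¬Disjoint (leftNbrs F j) (leftNbrs F k)) : False := by
  obtain ⟨x, hxi, hxj⟩ := Set.not_disjoint_iff.1 h₁
  obtain ⟨y, hyi, hyk⟩ := Set.not_disjoint_iff.1 h₂
  obtain ⟨z, hzj, hzk⟩ := Set.not_disjoint_iff.1 h₃
  have hxz : x ≠ z := by rintro rfl; exact hF.false_of_mem_of_mem_of_mem hij hik hjk hxi hxj hzk
  have hyz : y ≠ z := by rintro rfl; exact hF.false_of_mem_of_mem_of_mem hij hik hjk hyi hzj hyk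
  exact hjk <| Sum.inr_injective <| hF.isAcyclic.eq_of_adj_of_adj_of_adj (by simp) (by simpa)
    (by simpa) (by simpa) (by simpa) hxi hxj.symm hzj hyi hyk.symm hzk

theorem hasLeftPathThrough_of_not_disjoint_of_not_disjoint {i j k : β} (hi : i ∈ L) (hk : k ∈ L)
    (hij : ¬Disjoint (leftNbrs F i) (leftNbrs F j)) (hjk : ¬Disjoint (leftNbrs F j) (leftNbrs F k))
    (hik : Disjoint (leftNbrs F i) (leftNbrs F k)) : HasLeftPathThrough H {i, j, k} := by
  obtain ⟨x, hxi, hxj⟩ := Set.not_disjoint_iff.1 hij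
  obtain ⟨x', hx'j, hx'k⟩ := Set.not_disjoint_iff.1 hjk
  obtain ⟨c, hci, hcx⟩ := hF.exists_mem_ne hi x
  obtain ⟨d, hdk, hdx'⟩ := hF.exists_mem_ne hk x'
  have hij' : i ≠ j := by rintro rfl; exact hik.ne_of_mem hx'j hx'k rfl
  have hik' : i ≠ k := by rintro rfl; exact hik.ne_of_mem hxi hxi rfl
  have hjk' : j ≠ k := by rintro rfl; exact hik.ne_of_mem hxi hxj rfl
  have hcx' := hik.ne_of_mem hci hx'k
  have hcd := hik.ne_of_mem hci hdk
  have hxx' := hik.ne_of_mem hxi hx'k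
  have hxd := hik.ne_of_mem hxi hdk
  refine ⟨c, d, .cons (hF.le hci).symm <| .cons (hF.le hxi) <| .cons (hF.le hxj).symm <|
    .cons (hF.le hx'j) <| .cons (hF.le hx'k).symm <| .cons (hF.le hdk) .nil, hcd, ?_, by simp⟩
  simp [hcx, hcx', hcd, hxx', hxd, hdx'.symm, hij', hik', hjk']

theorem hasLeftPathThrough_of_not_disjoint (hfree : ∀ x, ∀ y ∉ L, H.Adj (.inl x) (.inr y))
    {t : β} (ht : t ∉ L) {i j k : β} (hi : i ∈ L) (hj : j ∈ L) (hk : k ∈ L) (hij : i ≠ j)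
    (hij' : ¬Disjoint (leftNbrs F i) (leftNbrs F j)) (hik : Disjoint (leftNbrs F i) (leftNbrs F k))
    (hjk : Disjoint (leftNbrs F j) (leftNbrs F k)) : HasLeftPathThrough H {i, j, k} := by
  obtain ⟨x, hxi, hxj⟩ := Set.not_disjoint_iff.1 hij'
  obtain ⟨c, hci, hcx⟩ := hF.exists_mem_ne hi x
  obtain ⟨d, hdj, hdx⟩ := hF.exists_mem_ne hj x
  obtain ⟨e, hek, f, hfk, hef⟩ := hF.exists_pair hk
  have hcd : c ≠ d := by rintro rfl; exact hcx (hF.eq_of_mem_of_mem hij hci hdj hxi hxj)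
  have hik' : i ≠ k := by rintro rfl; exact hik.ne_of_mem hxi hxi rfl
  have hjk' : j ≠ k := by rintro rfl; exact hjk.ne_of_mem hxj hxj rfl
  refine ⟨c, f, .cons (hF.le hci).symm <| .cons (hF.le hxi) <| .cons (hF.le hxj).symm <|
    .cons (hF.le hdj) <| .cons (hfree d t ht) <| .cons (hfree e t ht).symm <|
    .cons (hF.le hek).symm <| .cons (hF.le hfk) .nil, hik.ne_of_mem hci hfk, ?_, by simp⟩
  simp [hcx, hcd, hik.ne_of_mem hci hek, hik.ne_of_mem hci hfk, hdx.symm, hik.ne_of_mem hxi hek,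
    hik.ne_of_mem hxi hfk, hjk.ne_of_mem hdj hek, hjk.ne_of_mem hdj hfk, hef, hij, hik', hjk',
    ne_of_mem_of_not_mem hi ht, ne_of_mem_of_not_mem hj ht, (ne_of_mem_of_not_mem hk ht).symm]

theorem hasLeftPathThrough_of_pairwise_disjoint
    (hfree : ∀ x, ∀ y ∉ L, H.Adj (.inl x) (.inr y)) {t t' : β} (ht : t ∉ L) (ht' : t' ∉ L)
    (htt' : t ≠ t') {i j k : β} (hi : i ∈ L) (hj : j ∈ L) (hk : k ∈ L)
    (hij : Disjoint (leftNbrs F i) (leftNbrs F j)) (hik : Disjoint (leftNbrs F i) (leftNbrs F k))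
    (hjk : Disjoint (leftNbrs F j) (leftNbrs F k)) : HasLeftPathThrough H {i, j, k} := by
  obtain ⟨a, hai, a', ha'i, haa'⟩ := hF.exists_pair hi
  obtain ⟨b, hbj, b', hb'j, hbb'⟩ := hF.exists_pair hj
  obtain ⟨c, hck, c', hc'k, hcc'⟩ := hF.exists_pair hk
  have hij' : i ≠ j := by rintro rfl; exact hij.ne_of_mem hai hai rfl
  have hik' : i ≠ k := by rintro rfl; exact hik.ne_of_mem hai hai rfl
  have hjk' : j ≠ k := by rintro rfl; exact hjk.ne_of_mem hbj hbj rfl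
  refine ⟨a, c', .cons (hF.le hai).symm <| .cons (hF.le ha'i) <| .cons (hfree a' t ht) <|
    .cons (hfree b t ht).symm <| .cons (hF.le hbj).symm <| .cons (hF.le hb'j) <|
    .cons (hfree b' t' ht') <| .cons (hfree c t' ht').symm <| .cons (hF.le hck).symm <|
    .cons (hF.le hc'k) .nil, hik.ne_of_mem hai hc'k, ?_, by simp⟩
  simp [haa', hbb', hcc', hij.ne_of_mem hai hbj, hij.ne_of_mem hai hb'j, hij.ne_of_mem ha'i hbj,
    hij.ne_of_mem ha'i hb'j, hik.ne_of_mem hai hck, hik.ne_of_mem hai hc'k,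
    hik.ne_of_mem ha'i hck, hik.ne_of_mem ha'i hc'k, hjk.ne_of_mem hbj hck,
    hjk.ne_of_mem hbj hc'k, hjk.ne_of_mem hb'j hck, hjk.ne_of_mem hb'j hc'k, hij', hik', hjk',
    htt', ne_of_mem_of_not_mem hi ht, ne_of_mem_of_not_mem hi ht',
    ne_of_mem_of_not_mem hj ht', (ne_of_mem_of_not_mem hj ht).symm,
    (ne_of_mem_of_not_mem hk ht).symm, (ne_of_mem_of_not_mem hk ht').symm]

theorem hasLeftPathThrough_of_three [Finite α] [Finite β]
    (hfree : ∀ x, ∀ y ∉ L, H.Adj (.inl x) (.inr y)) {t t' : β} (ht : t ∉ L) (ht' : t' ∉ L)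
    (htt' : t ≠ t') {y₀ y₁ y₂ : β} (h₀ : y₀ ∈ L) (h₁ : y₁ ∈ L) (h₂ : y₂ ∈ L) (h₀₁ : y₀ ≠ y₁)
    (h₀₂ : y₀ ≠ y₂) (h₁₂ : y₁ ≠ y₂) : HasLeftPathThrough H {y₀, y₁, y₂} := by
  -- the three `y`'s are ordered along the relation "share a left neighbour"
  by_cases d₀₁ : Disjoint (leftNbrs F y₀) (leftNbrs F y₁) <;>
    by_cases d₀₂ : Disjoint (leftNbrs F y₀) (leftNbrs F y₂) <;>
    by_cases d₁₂ : Disjoint (leftNbrs F y₁) (leftNbrs F y₂)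
  · exact hF.hasLeftPathThrough_of_pairwise_disjoint hfree ht ht' htt' h₀ h₁ h₂ d₀₁ d₀₂ d₁₂
  · exact (hF.hasLeftPathThrough_of_not_disjoint hfree ht h₁ h₂ h₀ h₁₂ d₁₂ d₀₁.symm
      d₀₂.symm).mono (by simp [Set.insert_subset_iff])
  · exact (hF.hasLeftPathThrough_of_not_disjoint hfree ht h₀ h₂ h₁ h₀₂ d₀₂ d₀₁
      d₁₂.symm).mono (by simp [Set.insert_subset_iff])
  · exact (hF.hasLeftPathThrough_of_not_disjoint_of_not_disjoint h₀ h₁ d₀₂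
      (by rwa [disjoint_comm]) d₀₁).mono (by simp [Set.insert_subset_iff])
  · exact hF.hasLeftPathThrough_of_not_disjoint hfree ht h₀ h₁ h₂ h₀₁ d₀₁ d₀₂ d₁₂
  · exact hF.hasLeftPathThrough_of_not_disjoint_of_not_disjoint h₀ h₂ d₀₁ d₁₂ d₀₂
  · exact (hF.hasLeftPathThrough_of_not_disjoint_of_not_disjoint h₁ h₂
      (by rwa [disjoint_comm]) d₀₂ d₁₂).mono (by simp [Set.insert_subset_iff])
  · exact (hF.false_of_not_disjoint h₀₁ h₀₂ h₁₂ d₀₁ d₀₂ d₁₂).elim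

end IsGoodLinearForest

theorem stmt13_general (n : ℕ) (hn : 7 ≤ n) (H : SimpleGraph (Fin n ⊕ Fin n))
    (hbip : IsBipartition H (Set.range Sum.inl) (Set.range Sum.inr))
    (hcomp : ∀ i j : Fin n, 3 ≤ (j : ℕ) → H.Adj (Sum.inl i) (Sum.inr j))
    (F : SimpleGraph (Fin n ⊕ Fin n)) (hFH : F ≤ H)
    (hacyc : F.IsAcyclic)
    (hdegle : ∀ a : Fin n ⊕ Fin n, (F.neighborSet a).ncard ≤ 2)
    (hYin : ∀ j : Fin n, (j : ℕ) < 3 → (F.neighborSet (Sum.inr j)).ncard = 2) :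
    H.IsHamiltonian := by
  set L : Set (Fin n) := {j | (j : ℕ) < 3}
  have hfree : ∀ x, ∀ y ∉ L, H.Adj (.inl x) (.inr y) := fun x y hy => hcomp x y (not_lt.1 hy)
  have hF : IsGoodLinearForest H F L :=
    ⟨hFH, hacyc, fun x => hdegle _, fun j hj => hbip.ncard_neighborSet_inr hFH j ▸ hYin j hj⟩
  have hpath := hF.hasLeftPathThrough_of_three hfree (t := ⟨3, by omega⟩) (t' := ⟨4, by omega⟩)
    (y₀ := ⟨0, by omega⟩) (y₁ := ⟨1, by omega⟩) (y₂ := ⟨2, by omega⟩)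
    (by simp [L]) (by simp [L]) (by simp) (by simp [L]) (by simp [L]) (by simp [L])
    (by simp) (by simp) (by simp)
  refine (hpath.mono fun j hj => ?_).isHamiltonian hbip rfl hfree
  simp only [Set.mem_ofPred_eq, L] at hj
  simp [Fin.ext_iff]
  omega

/-- If `H` contains all edges `u_i v_j` for `j ≥ 4` and contains a good linear
forest (disjoint paths with end-vertices in `X`, all of whose `Y`-vertices lie in
`{v₁, v₂, v₃}`, covering `v₁, v₂, v₃`), then `H` has a Hamilton cycle. (Indices 0-based:
`v₁, v₂, v₃` are `Sum.inr j` with `(j : ℕ) < 3`.) The forest is encoded as a subgraph `F ≤ H`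
with maximum degree at most 2, no cycles, in which `v₁, v₂, v₃` have degree 2 (so they are
internal vertices of the paths) and all other `Y`-vertices have degree 0. -/
theorem stmt13 (n : ℕ) (hn : 7 ≤ n) (H : SimpleGraph (Fin n ⊕ Fin n))
    (hbip : IsBipartition H (Set.range Sum.inl) (Set.range Sum.inr))
    (hcomp : ∀ i j : Fin n, 3 ≤ (j : ℕ) → H.Adj (Sum.inl i) (Sum.inr j))
    (F : SimpleGraph (Fin n ⊕ Fin n)) (hFH : F ≤ H)
    (hacyc : F.IsAcyclic)
    (hdegle : ∀ a : Fin n ⊕ Fin n, (F.neighborSet a).ncard ≤ 2)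
    (hYout : ∀ j : Fin n, 3 ≤ (j : ℕ) → (F.neighborSet (Sum.inr j)).ncard = 0)
    (hYin : ∀ j : Fin n, (j : ℕ) < 3 → (F.neighborSet (Sum.inr j)).ncard = 2) :
    H.IsHamiltonian :=
  stmt13_general n hn H hbip hcomp F hFH hacyc hdegle hYin
end

section
/- Let n ≥ 5 and let H be a balanced bipartite graph with parts X = {u_1,…,u_n} and Y = {v_1,…,v_n} such that u_i is adjacent to v_j for all 1 ≤ i ≤ n and 3 ≤ j ≤ n, and such that d_H(v_1) = d_H(v_2) = 2. If the bipartite toughness of H satisfies t^B(H) ≥ 1, then H contains a Hamilton cycle. -/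
open SimpleGraph

/-!
Let `v₀ = inr 0` and `v₁ = inr 1` be the two vertices of degree 2. If they had the same
neighbourhood `S = {a, b}`, deleting `S ⊂ X` would leave `v₀`, `v₁` isolated next to the rest of the
graph, giving three components against `|S| = 2`. So the neighbourhoods differ, and either they
share exactly one vertex `w` or they are disjoint. Since every other vertex of `Y` is joined to all
of `X`, in each case a Hamilton cycle is obtained by threading `v₀`, `v₁` through their neighbours
and zig-zagging through the remaining vertices in any order.
-/

open SimpleGraph

theorem SimpleGraph.isHamiltonian_of_bijective {V : Type*} [Fintype V] [DecidableEq V]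
    {G : SimpleGraph V} {m : ℕ} [NeZero m] (hm : 3 ≤ m) (f : Fin m → V) (hf : f.Bijective)
    (hadj : ∀ i, G.Adj (f i) (f (i + 1))) : G.IsHamiltonian := by
  intro _
  let hom : cycleGraph m →g G := ⟨f, fun {u v} huv => by
    obtain ⟨k, rfl⟩ : ∃ k, m = k + 1 := ⟨m - 1, by omega⟩
    rw [cycleGraph_eq_circulantGraph, circulantGraph_adj] at huv
    rcases huv.2 with h | h
    · exact eq_add_of_sub_eq' h ▸ (hadj v).symm
    · exact eq_add_of_sub_eq' h ▸ hadj u⟩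
  obtain ⟨a, p, hp, hlen⟩ := (cycleGraph_isContained_iff hm).1 ⟨hom.toCopy hf.1⟩
  refine ⟨a, p, Walk.isHamiltonianCycle_iff_isCycle_and_length_eq.2 ⟨hp, ?_⟩⟩
  rw [hlen, ← Fintype.card_fin m]
  exact Fintype.card_congr (Equiv.ofBijective f hf)

theorem SimpleGraph.isHamiltonian_of_alternating {α β : Type*} [Fintype α] [Fintype β]
    [DecidableEq α] [DecidableEq β] {G : SimpleGraph (α ⊕ β)} {n : ℕ} [NeZero n] (hn : 2 ≤ n)
    (π : Fin n ≃ α) (τ : Fin n ≃ β) (h₁ : ∀ k, G.Adj (.inl (π k)) (.inr (τ k)))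
    (h₂ : ∀ k, G.Adj (.inr (τ k)) (.inl (π (k + 1)))) : G.IsHamiltonian := by
  have : NeZero (2 * n) := ⟨by omega⟩
  have hval : ∀ {m : ℕ} [NeZero m] (i : Fin m), ((i + 1 : Fin m) : ℕ) = (i + 1) % m := by
    intro m _ i
    rw [Fin.val_add, Fin.val_one', Nat.add_mod_mod]
  let f : Fin (2 * n) → α ⊕ β := fun i =>
    if (i : ℕ) % 2 = 0 then .inl (π ⟨i / 2, by omega⟩) else .inr (τ ⟨i / 2, by omega⟩)
  have hf : f.Injective := by
    intro i j hij
    simp only [f] at hij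
    split_ifs at hij <;> simp only [Sum.inl.injEq, Sum.inr.injEq, π.injective.eq_iff,
      τ.injective.eq_iff, Fin.mk.injEq] at hij <;> omega
  refine isHamiltonian_of_bijective (by omega) f ((Fintype.bijective_iff_injective_and_card f).2
    ⟨hf, by simp [Fintype.card_congr π.symm, Fintype.card_congr τ.symm]; omega⟩) fun i => ?_
  obtain ⟨k, hk | hk⟩ : ∃ k, (i : ℕ) = 2 * k ∨ (i : ℕ) = 2 * k + 1 := ⟨i / 2, by omega⟩
  · have hi : ((i + 1 : Fin (2 * n)) : ℕ) = 2 * k + 1 := by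
      rw [hval, hk, Nat.mod_eq_of_lt (by omega)]
    have hk₀ : 2 * k / 2 = k := by omega
    have hk₁ : (2 * k + 1) / 2 = k := by omega
    simp only [f, hi, hk, hk₀, hk₁]
    simpa using h₁ ⟨k, by omega⟩
  · have hi : ((i + 1 : Fin (2 * n)) : ℕ) = 2 * ((⟨k, by omega⟩ + 1 : Fin n) : ℕ) := by
      rw [hval, hval, hk, Fin.val_mk, show 2 * k + 1 + 1 = 2 * (k + 1) by ring,
        Nat.mul_mod_mul_left]
    have hk₁ : (2 * k + 1) / 2 = k := by omega
    simp only [f, hi, hk, hk₁]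
    simpa using h₂ ⟨k, by omega⟩

theorem IsBipartition.neighborSet_subset_s14 {V : Type*} {G : SimpleGraph V} {X Y : Set V}
    (h : IsBipartition G X Y) {y : V} (hy : y ∈ Y) : G.neighborSet y ⊆ X :=
  fun _ hw => ((h.2.2 hw).resolve_left fun h' => h.2.1.notMem_of_mem_left h'.1 hy).2

theorem IsBipartition.exists_neighborSet_inr_eq_pair {α β : Type*}
    {G : SimpleGraph (α ⊕ β)} (h : IsBipartition G (Set.range Sum.inl) (Set.range Sum.inr))
    {j : β} (hj : (G.neighborSet (.inr j)).ncard = 2) :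
    ∃ a b, a ≠ b ∧ G.neighborSet (.inr j) = {.inl a, .inl b} := by
  obtain ⟨u, w, huw, hN⟩ := Set.ncard_eq_two.1 hj
  have hsub := h.neighborSet_subset_s14 (Set.mem_range_self j)
  rw [hN] at hsub
  obtain ⟨a, rfl⟩ := hsub (Set.mem_insert _ _)
  obtain ⟨b, rfl⟩ := hsub (Set.mem_insert_of_mem _ rfl)
  exact ⟨a, b, fun hab => huw (hab ▸ rfl), hN⟩

theorem SimpleGraph.connectedComponentMk_induce_compl_ne {V : Type*} {G : SimpleGraph V}
    {S : Set V} {u v : V} (hu : u ∉ S) (hv : v ∉ S) (hN : G.neighborSet u ⊆ S) (huv : u ≠ v) :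
    (G.induce Sᶜ).connectedComponentMk ⟨u, hu⟩ ≠ (G.induce Sᶜ).connectedComponentMk ⟨v, hv⟩ :=
  fun h => not_reachable_of_neighborSet_left_eq_empty (by simpa using huv)
    ((neighborSet_eq_empty _).2 fun w hw => w.2 (hN hw)) (ConnectedComponent.eq.1 h)

theorem three_le_numComp {V : Type*} [Finite V] {G : SimpleGraph V} {S : Set V} {x y z : V}
    (hx : x ∉ S) (hy : y ∉ S) (hz : z ∉ S) (hxy : x ≠ y) (hxz : x ≠ z) (hyz : y ≠ z)
    (hNx : G.neighborSet x ⊆ S) (hNy : G.neighborSet y ⊆ S) : 3 ≤ numComp G S := by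
  have := Fintype.ofFinite (G.induce Sᶜ).ConnectedComponent
  rw [numComp, Nat.card_eq_fintype_card]
  exact Fintype.two_lt_card_iff.2 ⟨_, _, _, connectedComponentMk_induce_compl_ne hx hy hNx hxy,
    connectedComponentMk_induce_compl_ne hx hz hNx hxz,
    connectedComponentMk_induce_compl_ne hy hz hNy hyz⟩

theorem BTough1.neighborSet_ne {V : Type*} [Finite V] {G : SimpleGraph V} {X Y : Set V}
    (hG : BTough1 G X Y) (hbip : IsBipartition G X Y) {x y z : V} (hx : x ∈ Y) (hy : y ∈ Y)
    (hz : z ∈ Y) (hxy : x ≠ y) (hxz : x ≠ z) (hyz : y ≠ z)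
    (hcard : (G.neighborSet x).ncard ≤ 2) (hX : 2 < X.ncard) :
    G.neighborSet x ≠ G.neighborSet y := by
  intro hN
  have hNX := hbip.neighborSet_subset_s14 hx
  have hout : ∀ {v}, v ∈ Y → v ∉ G.neighborSet x :=
    fun hv h => hbip.2.1.notMem_of_mem_right hv (hNX h)
  have h3 := three_le_numComp (hout hx) (hout hy) (hout hz) hxy hxz hyz le_rfl hN.ge
  have hproper : G.neighborSet x ⊂ X := hNX.ssubset_of_ne fun h => by rw [h] at hcard; omega
  have := hG _ (Or.inl hproper) (by omega)
  omega

theorem Fin.eq_zero_or_eq_one_or_two_le {m : ℕ} (k : Fin (m + 2)) :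
    k = 0 ∨ k = 1 ∨ 2 ≤ (k : ℕ) := by
  rcases k with ⟨_ | _ | k, hk⟩ <;> simp [Fin.ext_iff]

section Construction

variable {m : ℕ}

/-- The Hamilton cycle `p, v₀, w, v₁, q, v₂, …` with `vⱼ = inr j`. -/
theorem isHamiltonian_of_shared_neighbor {H : SimpleGraph (Fin (m + 3) ⊕ Fin (m + 3))}
    (hcomp : ∀ i j : Fin (m + 3), 2 ≤ (j : ℕ) → H.Adj (.inl i) (.inr j))
    {p w q : Fin (m + 3)} (hpw : p ≠ w) (hpq : p ≠ q) (hwq : w ≠ q)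
    (hp : H.Adj (.inl p) (.inr 0)) (hw₀ : H.Adj (.inl w) (.inr 0))
    (hw₁ : H.Adj (.inl w) (.inr 1)) (hq : H.Adj (.inl q) (.inr 1)) : H.IsHamiltonian := by
  have hmod2 : 2 % (m + 3) = 2 := Nat.mod_eq_of_lt (by omega)
  obtain ⟨π, hπ⟩ := Equiv.Perm.exists_extending_pair ![0, 1, 2] ![p, w, q]
    (by intro i j; fin_cases i <;> fin_cases j <;> simp [Fin.ext_iff, hmod2])
    (by intro i j; fin_cases i <;> fin_cases j <;> simp [*, Ne.symm])
  have h0 : π 0 = p := hπ 0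
  have h1 : π 1 = w := hπ 1
  have h2 : π 2 = q := hπ 2
  refine isHamiltonian_of_alternating (by omega) π (Equiv.refl _) (fun k => ?_) (fun k => ?_)
  all_goals obtain rfl | rfl | hk := k.eq_zero_or_eq_one_or_two_le
  · simpa [h0] using hp
  · simpa [h1] using hw₁
  · exact hcomp _ _ hk
  · simpa [h1] using hw₀.symm
  · show H.Adj _ (.inl (π 2))
    simpa [h2] using hq.symm
  · exact (hcomp _ _ hk).symm

/-- The Hamilton cycle `a, v₀, b, v₂, c, v₁, d, v₃, …` with `vⱼ = inr j`. -/
theorem isHamiltonian_of_disjoint_neighbors {H : SimpleGraph (Fin (m + 4) ⊕ Fin (m + 4))}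
    (hcomp : ∀ i j : Fin (m + 4), 2 ≤ (j : ℕ) → H.Adj (.inl i) (.inr j))
    {a b c d : Fin (m + 4)} (hab : a ≠ b) (hac : a ≠ c) (had : a ≠ d) (hbc : b ≠ c)
    (hbd : b ≠ d) (hcd : c ≠ d) (ha : H.Adj (.inl a) (.inr 0)) (hb : H.Adj (.inl b) (.inr 0))
    (hc : H.Adj (.inl c) (.inr 1)) (hd : H.Adj (.inl d) (.inr 1)) : H.IsHamiltonian := by
  have hmod2 : 2 % (m + 4) = 2 := Nat.mod_eq_of_lt (by omega)
  have hmod3 : 3 % (m + 4) = 3 := Nat.mod_eq_of_lt (by omega)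
  obtain ⟨π, hπ⟩ := Equiv.Perm.exists_extending_pair ![0, 1, 2, 3] ![a, b, c, d]
    (by intro i j; fin_cases i <;> fin_cases j <;> simp [Fin.ext_iff, hmod2, hmod3])
    (by intro i j; fin_cases i <;> fin_cases j <;> simp [*, Ne.symm])
  have h0 : π 0 = a := hπ 0
  have h1 : π 1 = b := hπ 1
  have h2 : π 2 = c := hπ 2
  have h3 : π 3 = d := hπ 3
  have hτ : ∀ k : Fin (m + 4), 2 ≤ (k : ℕ) → k ≠ 2 → Equiv.swap 1 2 k = k :=
    fun k hk hk2 => Equiv.swap_apply_of_ne_of_ne (by rintro rfl; simp at hk) hk2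
  have hτ0 : Equiv.swap (1 : Fin (m + 4)) 2 0 = 0 :=
    Equiv.swap_apply_of_ne_of_ne (by simp) (by simp [Fin.ext_iff, hmod2])
  refine isHamiltonian_of_alternating (by omega) π (Equiv.swap 1 2) (fun k => ?_) (fun k => ?_)
  all_goals obtain rfl | rfl | hk := k.eq_zero_or_eq_one_or_two_le
  · rw [h0, hτ0]; exact ha
  · rw [h1, Equiv.swap_apply_left]; exact hcomp _ _ (by simp [hmod2])
  · obtain rfl | hk2 := eq_or_ne k 2
    · rw [h2, Equiv.swap_apply_right]; exact hc
    · rw [hτ k hk hk2]; exact hcomp _ _ hk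
  · rw [zero_add, h1, hτ0]; exact hb.symm
  · rw [Equiv.swap_apply_left]; exact (hcomp _ _ (by simp [hmod2])).symm
  · obtain rfl | hk2 := eq_or_ne k 2
    · show H.Adj (.inr (Equiv.swap 1 2 2)) (.inl (π 3))
      rw [Equiv.swap_apply_right, h3]; exact hd.symm
    · rw [hτ k hk hk2]; exact (hcomp _ _ hk).symm

theorem isHamiltonian_of_neighborSet_ne {H : SimpleGraph (Fin (m + 4) ⊕ Fin (m + 4))}
    (hcomp : ∀ i j : Fin (m + 4), 2 ≤ (j : ℕ) → H.Adj (.inl i) (.inr j))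
    {a b c d : Fin (m + 4)} (hab : a ≠ b) (hcd : c ≠ d)
    (hN₀ : H.neighborSet (.inr 0) = {.inl a, .inl b})
    (hN₁ : H.neighborSet (.inr 1) = {.inl c, .inl d})
    (hne : H.neighborSet (.inr 0) ≠ H.neighborSet (.inr 1)) : H.IsHamiltonian := by
  have adj : ∀ {i j}, Sum.inl i ∈ H.neighborSet (.inr j) → H.Adj (.inl i) (.inr j) :=
    fun h => h.symm
  have ha : H.Adj (.inl a) (.inr 0) := adj (by simp [hN₀])
  have hb : H.Adj (.inl b) (.inr 0) := adj (by simp [hN₀])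
  have hc : H.Adj (.inl c) (.inr 1) := adj (by simp [hN₁])
  have hd : H.Adj (.inl d) (.inr 1) := adj (by simp [hN₁])
  rw [hN₀, hN₁] at hne
  by_cases hac : a = c
  · subst hac
    exact isHamiltonian_of_shared_neighbor hcomp hab.symm (by rintro rfl; exact hne rfl) hcd
      hb ha hc hd
  by_cases had : a = d
  · subst had
    exact isHamiltonian_of_shared_neighbor hcomp hab.symm
      (by rintro rfl; exact hne (Set.pair_comm _ _)) hcd.symm hb ha hd hc
  by_cases hbc : b = c
  · subst hbc
    exact isHamiltonian_of_shared_neighbor hcomp hab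
      (by rintro rfl; exact hne (Set.pair_comm _ _)) hcd ha hb hc hd
  by_cases hbd : b = d
  · subst hbd
    exact isHamiltonian_of_shared_neighbor hcomp hab hac hcd.symm ha hb hd hc
  exact isHamiltonian_of_disjoint_neighbors hcomp hab hac had hbc hbd hcd ha hb hc hd

end Construction

/-- Let `n ≥ 5` and let `H` be balanced bipartite with parts
`X = {u_1,…,u_n}`, `Y = {v_1,…,v_n}` containing all edges `u_i v_j` for `j ≥ 3`, with
`d(v₁) = d(v₂) = 2`. If `H` has bipartite toughness at least `1`, then `H` has a Hamilton
cycle. (Indices 0-based: `v₁, v₂` are `Sum.inr j` with `(j : ℕ) < 2`.) -/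
theorem stmt14 (n : ℕ) (hn : 5 ≤ n) (H : SimpleGraph (Fin n ⊕ Fin n))
    (hbip : IsBipartition H (Set.range Sum.inl) (Set.range Sum.inr))
    (hcomp : ∀ i j : Fin n, 2 ≤ (j : ℕ) → H.Adj (Sum.inl i) (Sum.inr j))
    (hdeg : ∀ j : Fin n, (j : ℕ) < 2 → (H.neighborSet (Sum.inr j)).ncard = 2)
    (htough : BTough1 H (Set.range Sum.inl) (Set.range Sum.inr)) :
    H.IsHamiltonian := by
  obtain ⟨m, rfl⟩ : ∃ m, n = m + 5 := ⟨n - 5, by omega⟩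
  have hmod2 : 2 % (m + 5) = 2 := Nat.mod_eq_of_lt (by omega)
  obtain ⟨a, b, hab, hN₀⟩ := hbip.exists_neighborSet_inr_eq_pair (hdeg 0 (by simp))
  obtain ⟨c, d, hcd, hN₁⟩ := hbip.exists_neighborSet_inr_eq_pair (hdeg 1 (by simp))
  refine isHamiltonian_of_neighborSet_ne hcomp hab hcd hN₀ hN₁ ?_
  refine htough.neighborSet_ne hbip (Set.mem_range_self 0) (Set.mem_range_self 1)
    (Set.mem_range_self 2) (by simp) (by simp [Fin.ext_iff, hmod2]) (by simp [Fin.ext_iff, hmod2])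
    ?_ ?_
  · rw [hN₀, Set.ncard_pair (by simpa using hab)]
  · simp [Set.ncard_range_of_injective Sum.inl_injective]
end

section
/- Let n ≥ 16 and let H be a balanced bipartite graph with parts X = {u_1,…,u_n} and Y = {v_1,…,v_n} such that u_i is adjacent to v_j for all 1 ≤ i ≤ n and 4 ≤ j ≤ n, and such that d_H(v_i) ≤ 3 for i = 1, 2, 3. If the bipartite toughness of H satisfies t^B(H) ≥ 1 and H contains no Hamilton cycle, then d_H(v_i) = 2 for each i = 1, 2, 3. -/
open SimpleGraph

/-!
Write `N(v)` for the neighbourhood of `v` in `X`. For a nonempty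
`J ⊆ {v₁, v₂, v₃}`, removing `N(J)` leaves every vertex of `J` isolated and `v₄` in yet another
component, so bipartite 1-toughness gives the Hall-type surplus `|N(J)| ≥ |J| + 1`; in particular
`d(vᵢ) ≥ 2`. If some `d(vᵢ) = 3`, these inequalities let one pick, for each `i ≤ 3`, two
neighbours of `vᵢ` which are consecutive in some cyclic order of `X`, at three different places.
Inserting `v₁, v₂, v₃` into those gaps, and the remaining `vⱼ` (adjacent to all of `X`) into the
other gaps, gives a Hamilton cycle.
-/

open Finset Function Sum

namespace Finset

variable {α : Type*} [DecidableEq α] {A B C P Q s t : Finset α}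

theorem exists_mem_of_subset_union_of_card_lt (h : A ⊆ s ∪ t) (hlt : #t < #A) :
    ∃ x ∈ A, x ∈ s := by
  by_contra! h'
  have : A ⊆ t := fun x hx => (mem_union.1 (h hx)).resolve_left (h' x hx)
  exact absurd (card_le_card this) (by omega)

theorem exists_mem_mem_ne_of_two_le_card_union (hP : P.Nonempty) (hQ : Q.Nonempty)
    (h : 2 ≤ #(P ∪ Q)) : ∃ p ∈ P, ∃ q ∈ Q, p ≠ q := by
  by_contra! h'
  obtain ⟨p, hp⟩ := hP
  obtain ⟨q, hq⟩ := hQ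
  have : P ∪ Q ⊆ {q} := fun y hy => mem_singleton.2 <| by
    rcases mem_union.1 hy with hy | hy
    · exact h' y hy q hq
    · exact (h' p hp y hy).symm.trans (h' p hp q hq)
  have := card_le_card this
  rw [card_singleton] at this
  omega

theorem exists_path_of_card_union_eq_three (hB : 2 ≤ #B) (hC : 2 ≤ #C)
    (hBC : #(B ∪ C) = 3) : ∃ b ∈ B, ∃ x ∈ B ∩ C, ∃ c ∈ C, [b, x, c].Nodup := by
  obtain ⟨x, hx⟩ : (B ∩ C).Nonempty := by
    rw [← card_pos]
    have := card_union_add_card_inter B C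
    omega
  have hxB := (mem_inter.1 hx).1
  have hxC := (mem_inter.1 hx).2
  obtain ⟨b, hb, c, hc, hbc⟩ := exists_mem_mem_ne_of_two_le_card_union (P := B.erase x)
    (Q := C.erase x) (by rw [← card_pos, card_erase_of_mem hxB]; omega)
    (by rw [← card_pos, card_erase_of_mem hxC]; omega)
    (by rw [← erase_union_distrib, card_erase_of_mem (mem_union_left _ hxB)]; omega)
  rw [mem_erase] at hb hc
  exact ⟨b, hb.2, x, hx, c, hc.2, by simp [hbc, hb.1, hc.1.symm]⟩

/-- Hall's theorem for the family `B, B, C, C`. -/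
theorem exists_disjoint_pairs (hB : 2 ≤ #B) (hC : 2 ≤ #C) (hBC : 4 ≤ #(B ∪ C)) :
    ∃ b ∈ B, ∃ b' ∈ B, ∃ c ∈ C, ∃ c' ∈ C, [b, b', c, c'].Nodup := by
  let t : Fin 2 ⊕ Fin 2 → Finset α := Sum.elim (fun _ => B) (fun _ => C)
  have hall : ∀ s : Finset (Fin 2 ⊕ Fin 2), #s ≤ #(s.biUnion t) := by
    intro s
    have hs := card_toLeft_add_card_toRight (u := s)
    have hl : #s.toLeft ≤ 2 := by simpa using card_le_univ s.toLeft
    have hr : #s.toRight ≤ 2 := by simpa using card_le_univ s.toRight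
    have hBsub : s.toLeft.Nonempty → B ⊆ s.biUnion t := fun ⟨i, hi⟩ =>
      subset_biUnion_of_mem t (mem_toLeft.1 hi)
    have hCsub : s.toRight.Nonempty → C ⊆ s.biUnion t := fun ⟨i, hi⟩ =>
      subset_biUnion_of_mem t (mem_toRight.1 hi)
    rcases s.toLeft.eq_empty_or_nonempty with hl0 | hl0 <;>
      rcases s.toRight.eq_empty_or_nonempty with hr0 | hr0
    · rw [hl0, hr0, card_empty] at hs; omega
    · have := card_le_card (hCsub hr0); rw [hl0, card_empty] at hs; omega
    · have := card_le_card (hBsub hl0); rw [hr0, card_empty] at hs; omega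
    · have := card_le_card (union_subset (hBsub hl0) (hCsub hr0)); omega
  obtain ⟨f, hf, hft⟩ := (all_card_le_biUnion_card_iff_exists_injective t).1 hall
  refine ⟨f (.inl 0), hft _, f (.inl 1), hft _, f (.inr 0), hft _, f (.inr 1), hft _, ?_⟩
  simp [hf.eq_iff]

end Finset

/-- In the application `N j` is the neighbourhood in `X` of one of the three special vertices of
`Y`: the list is an initial segment of a cyclic order of `X`, and that vertex is inserted between
its entries at positions `p j` and `p j + 1`. -/
def HasConsecutivePairs {α : Type*} (N : Fin 3 → Finset α) : Prop :=
  ∃ (l : List α) (p : Fin 3 → ℕ), l.Nodup ∧ Injective p ∧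
    ∀ j, ∃ h : p j + 1 < l.length, l[p j] ∈ N j ∧ l[p j + 1] ∈ N j

namespace HasConsecutivePairs

variable {α : Type*} {N : Fin 3 → Finset α} {A B C : Finset α}

theorem of_comp (π : Equiv.Perm (Fin 3)) (h : HasConsecutivePairs (N ∘ π)) :
    HasConsecutivePairs N := by
  obtain ⟨l, p, hl, hp, hpairs⟩ := h
  exact ⟨l, p ∘ π.symm, hl, hp.comp π.symm.injective, fun j => by simpa using hpairs (π.symm j)⟩

theorem swap (h : HasConsecutivePairs ![A, C, B]) : HasConsecutivePairs ![A, B, C] :=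
  of_comp (Equiv.swap 1 2) (by convert h using 1; funext j; fin_cases j <;> rfl)

theorem of_pendant {a b b' c c' : α} (hb : b ∈ B) (hb' : b' ∈ B) (hc : c ∈ C) (hc' : c' ∈ C)
    (hb'A : b' ∈ A) (ha : a ∈ A) (hl : [b, b', a, c, c'].Nodup) :
    HasConsecutivePairs ![A, B, C] :=
  ⟨_, ![1, 0, 3], hl, by decide, fun j => by fin_cases j <;> simp [*]⟩

theorem of_bridge {b b' c c' : α} (hb : b ∈ B) (hb' : b' ∈ B) (hc : c ∈ C) (hc' : c' ∈ C)
    (hb'A : b' ∈ A) (hcA : c ∈ A) (hl : [b, b', c, c'].Nodup) :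
    HasConsecutivePairs ![A, B, C] :=
  ⟨_, ![1, 0, 2], hl, by decide, fun j => by fin_cases j <;> simp [*]⟩

theorem of_three_pairs {a a' b b' c c' : α} (ha : a ∈ A) (ha' : a' ∈ A) (hb : b ∈ B)
    (hb' : b' ∈ B) (hc : c ∈ C) (hc' : c' ∈ C) (hl : [a, a', b, b', c, c'].Nodup) :
    HasConsecutivePairs ![A, B, C] :=
  ⟨_, ![0, 2, 4], hl, by decide, fun j => by fin_cases j <;> simp [*]⟩

theorem of_path_end {a b x c : α} (ha : a ∈ A) (hbA : b ∈ A) (hb : b ∈ B) (hxB : x ∈ B)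
    (hxC : x ∈ C) (hc : c ∈ C) (hl : [a, b, x, c].Nodup) :
    HasConsecutivePairs ![A, B, C] :=
  ⟨_, ![0, 1, 2], hl, by decide, fun j => by fin_cases j <;> simp [*]⟩

theorem of_path_pendant {a a' b x c : α} (ha : a ∈ A) (ha' : a' ∈ A) (hb : b ∈ B)
    (hxB : x ∈ B) (hxC : x ∈ C) (hc : c ∈ C) (hl : [a, a', b, x, c].Nodup) :
    HasConsecutivePairs ![A, B, C] :=
  ⟨_, ![0, 2, 3], hl, by decide, fun j => by fin_cases j <;> simp [*]⟩

variable [DecidableEq α]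

/-- A pair in `A` either uses a vertex off the pairs `b b'`, `c c'`, or, as `3 ≤ #A`,
bridges them. -/
theorem of_disjoint_pairs (hA : 3 ≤ #A) {b b' c c' : α} (hb : b ∈ B) (hb' : b' ∈ B)
    (hc : c ∈ C) (hc' : c' ∈ C) (hl : [b, b', c, c'].Nodup) :
    HasConsecutivePairs ![A, B, C] := by
  by_cases hfresh : ∃ a' ∈ A, a' ∉ [b, b', c, c']
  · obtain ⟨a', ha', ha'l⟩ := hfresh
    obtain ⟨a, ha, haa'⟩ := exists_mem_ne (s := A) (by omega) a'
    by_cases hal : a ∈ [b, b', c, c']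
    · simp only [List.mem_cons, List.not_mem_nil, or_false] at hal
      rcases hal with rfl | rfl | rfl | rfl
      · exact of_pendant hb' hb hc hc' ha ha' (by grind)
      · exact of_pendant hb hb' hc hc' ha ha' (by grind)
      · exact swap (of_pendant hc' hc hb hb' ha ha' (by grind))
      · exact swap (of_pendant hc hc' hb hb' ha ha' (by grind))
    · exact of_three_pairs ha ha' hb hb' hc hc' (by grind)
  · push Not at hfresh
    have hsub : A ⊆ {b, b'} ∪ {c, c'} := fun a ha => by
      simpa only [mem_union, mem_insert, mem_singleton, List.mem_cons, List.not_mem_nil, or_false,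
        or_assoc] using hfresh a ha
    obtain ⟨β, hβ, hβb⟩ := exists_mem_of_subset_union_of_card_lt hsub (card_le_two.trans_lt hA)
    obtain ⟨γ, hγ, hγc⟩ := exists_mem_of_subset_union_of_card_lt
      (hsub.trans (union_comm _ _).subset) (card_le_two.trans_lt hA)
    simp only [mem_insert, mem_singleton] at hβb hγc
    rcases hβb with h | h <;> rcases hγc with h' | h' <;> rw [h] at hβ <;> rw [h'] at hγ
    · exact of_bridge hb' hb hc hc' hβ hγ (by grind)
    · exact of_bridge hb' hb hc' hc hβ hγ (by grind)
    · exact of_bridge hb hb' hc hc' hβ hγ hl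
    · exact of_bridge hb hb' hc' hc hβ hγ (by grind)

theorem of_path (hA : 3 ≤ #A) {b x c a' : α} (hb : b ∈ B) (hxB : x ∈ B) (hxC : x ∈ C)
    (hc : c ∈ C) (hl : [b, x, c].Nodup) (ha' : a' ∈ A) (ha'l : a' ∉ [b, x, c]) :
    HasConsecutivePairs ![A, B, C] := by
  obtain ⟨a, ha⟩ : (A \ {x, a'}).Nonempty := by
    rw [← card_pos]
    have := le_card_sdiff {x, a'} A
    have : #{x, a'} ≤ 2 := card_le_two
    omega
  simp only [mem_sdiff, mem_insert, mem_singleton, not_or] at ha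
  by_cases hab : a = b
  · exact of_path_end ha' (hab ▸ ha.1) hb hxB hxC hc (by grind)
  by_cases hac : a = c
  · exact swap (of_path_end ha' (hac ▸ ha.1) hc hxC hxB hb (by grind))
  · exact of_path_pendant ha.1 ha' hb hxB hxC hc (by grind)

theorem of_card (hA : 3 ≤ #A) (hB : 2 ≤ #B) (hC : 2 ≤ #C) (hBC : 3 ≤ #(B ∪ C))
    (hABC : 4 ≤ #(A ∪ B ∪ C)) : HasConsecutivePairs ![A, B, C] := by
  rcases le_or_gt 4 #(B ∪ C) with h4 | h3
  · obtain ⟨b, hb, b', hb', c, hc, c', hc', hl⟩ := exists_disjoint_pairs hB hC h4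
    exact of_disjoint_pairs hA hb hb' hc hc' hl
  · obtain ⟨b, hb, x, hx, c, hc, hl⟩ := exists_path_of_card_union_eq_three hB hC (by omega)
    obtain ⟨a, ha⟩ : (A \ (B ∪ C)).Nonempty := by
      rw [← card_pos]
      have := card_sdiff_add_card A (B ∪ C)
      rw [← union_assoc] at this
      omega
    rw [mem_sdiff] at ha
    rw [mem_inter] at hx
    exact of_path hA hb hx.1 hx.2 hc hl ha.1 (by grind)

theorem of_hall {j₀ : Fin 3} (h₀ : 3 ≤ #(N j₀))
    (hall : ∀ J : Finset (Fin 3), J.Nonempty → #J + 1 ≤ #(J.biUnion N)) :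
    HasConsecutivePairs N := by
  let M := N ∘ Equiv.swap 0 j₀
  have hallM : ∀ J : Finset (Fin 3), J.Nonempty → #J + 1 ≤ #(J.biUnion M) := fun J hJ => by
    simpa [M, Function.comp_def, image_biUnion, card_image_of_injective _ (Equiv.injective _)]
      using hall (J.image (Equiv.swap 0 j₀)) (hJ.image _)
  have hM : M = ![M 0, M 1, M 2] := by funext j; fin_cases j <;> rfl
  refine of_comp (Equiv.swap 0 j₀) ?_
  change HasConsecutivePairs M
  rw [hM]
  refine of_card ?_ ?_ ?_ ?_ ?_
  · simpa [M] using h₀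
  · simpa using hallM {1}
  · simpa using hallM {2}
  · simpa using hallM {1, 2}
  · simpa [biUnion_insert, union_assoc] using hallM {0, 1, 2}

end HasConsecutivePairs

theorem val_finRotate {m : ℕ} (i : Fin m) :
    (finRotate m i : ℕ) = if (i : ℕ) + 1 = m then 0 else (i : ℕ) + 1 := by
  rcases m with _ | m
  · exact i.elim0
  · rw [coe_finRotate]
    simp [Fin.ext_iff]

namespace SimpleGraph

variable {V : Type*} {G : SimpleGraph V}

theorem isContained_cycleGraph_of_adj_finRotate {m : ℕ} {f : Fin m → V} (hf : Injective f)
    (hadj : ∀ i, G.Adj (f i) (f (finRotate m i))) : cycleGraph m ⊑ G := by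
  refine ⟨⟨⟨f, fun {u v} huv => ?_⟩, hf⟩⟩
  rcases m with _ | _ | k
  · exact u.elim0
  · exact absurd huv cycleGraph_one_adj
  · rcases cycleGraph_adj.1 huv with h | h
    · rw [sub_eq_iff_eq_add'.1 h]
      simpa [finRotate_apply] using (hadj v).symm
    · rw [sub_eq_iff_eq_add'.1 h]
      simpa [finRotate_apply] using hadj u

theorem isHamiltonian_of_isContained_cycleGraph [Fintype V] [DecidableEq V]
    (hV : 3 ≤ Fintype.card V) (hG : cycleGraph (Fintype.card V) ⊑ G) : G.IsHamiltonian :=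
  fun _ =>
    let ⟨v, p, hp, hl⟩ := (cycleGraph_isContained_iff hV).1 hG
    ⟨v, p, Walk.isHamiltonianCycle_iff_isCycle_and_length_eq.2 ⟨hp, hl⟩⟩

theorem isHamiltonian_of_interleave {α β : Type*} [Fintype α] [Fintype β] [DecidableEq α]
    [DecidableEq β] {G : SimpleGraph (α ⊕ β)} {k : ℕ} (hk : 2 ≤ k) (σ : Fin k ≃ α)
    (τ : Fin k ≃ β)
    (h : ∀ i, G.Adj (inl (σ i)) (inr (τ i)) ∧ G.Adj (inr (τ i)) (inl (σ (finRotate k i)))) :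
    G.IsHamiltonian := by
  have hcard : Fintype.card (α ⊕ β) = 2 * k := by
    simp [← Fintype.card_congr σ, ← Fintype.card_congr τ, two_mul]
  let f : Fin (2 * k) → α ⊕ β := fun i =>
    if (i : ℕ) % 2 = 0 then inl (σ ⟨i / 2, by omega⟩) else inr (τ ⟨i / 2, by omega⟩)
  have f_even : ∀ (i : Fin (2 * k)) (j : Fin k), (i : ℕ) = 2 * j → f i = inl (σ j) := by
    intro i j hij
    simp only [f, hij, Nat.mul_mod_right, if_true, Nat.mul_div_cancel_left _ two_pos]
  have f_odd : ∀ (i : Fin (2 * k)) (j : Fin k), (i : ℕ) = 2 * j + 1 → f i = inr (τ j) := by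
    intro i j hij
    have h1 : (i : ℕ) % 2 ≠ 0 := by omega
    have h2 : (i : ℕ) / 2 = j := by omega
    simp only [f, h1, if_false, h2]
  refine isHamiltonian_of_isContained_cycleGraph (by omega) (hcard ▸ ?_)
  refine isContained_cycleGraph_of_adj_finRotate (f := f) ?_ fun i => ?_
  · have hval : ∀ i, Sum.elim (fun a => 2 * (σ.symm a : ℕ)) (fun b => 2 * (τ.symm b : ℕ) + 1)
        (f i) = i := by
      intro i
      obtain ⟨j, hj | hj⟩ := Nat.even_or_odd' i
      · simp [f_even i ⟨j, by omega⟩ hj, hj]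
      · simp [f_odd i ⟨j, by omega⟩ hj, hj]
    exact fun x y hxy => Fin.ext (by rw [← hval x, hxy, hval y])
  · obtain ⟨j, hj | hj⟩ := Nat.even_or_odd' i
    · have hj' : j < k := by omega
      rw [f_even i ⟨j, hj'⟩ hj, f_odd _ ⟨j, hj'⟩ (by simp only [val_finRotate]; split_ifs <;> omega)]
      exact (h _).1
    · have hj' : j < k := by omega
      rw [f_odd i ⟨j, hj'⟩ hj, f_even _ (finRotate k ⟨j, hj'⟩)
        (by simp only [val_finRotate]; split_ifs <;> omega)]
      exact (h _).2

end SimpleGraph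

theorem card_add_one_le_numComp {V : Type*} [Finite V] {G : SimpleGraph V} {S : Set V}
    {I : Finset V} {y : V} (hI : ∀ v ∈ I, v ∉ S ∧ G.neighborSet v ⊆ S) (hy : y ∉ S)
    (hyI : y ∉ I) : #I + 1 ≤ numComp G S := by
  have hiso : ∀ (v : I) (w : ↥Sᶜ), (G.induce Sᶜ).Reachable ⟨v, (hI v v.2).1⟩ w →
      w = ⟨v, (hI v v.2).1⟩ := by
    rintro v w ⟨p⟩
    cases p with
    | nil => rfl
    | @cons _ x _ hadj _ => exact absurd ((hI v v.2).2 hadj) x.2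
  let φ : Option I → (G.induce Sᶜ).ConnectedComponent := fun o =>
    o.elim (G.induce Sᶜ |>.connectedComponentMk ⟨y, hy⟩)
      fun v => (G.induce Sᶜ).connectedComponentMk ⟨v, (hI v v.2).1⟩
  have hφ : Injective φ := by
    rintro (_ | v) (_ | w) h <;> simp only [φ, Option.elim, ConnectedComponent.eq] at h
    · rfl
    · have : y = w := congrArg Subtype.val (hiso w _ h.symm)
      exact absurd (this ▸ w.2) hyI
    · have : y = v := congrArg Subtype.val (hiso v _ h)
      exact absurd (this ▸ v.2) hyI
    · exact congrArg some (Subtype.ext (congrArg Subtype.val (hiso v _ h)).symm)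
  simpa [numComp] using Nat.card_le_card_of_injective φ hφ

section Bipartite

variable {α β : Type*} [Fintype α] {G : SimpleGraph (α ⊕ β)} [DecidableRel G.Adj]

variable (G) in
def leftNeighborFinset (v : α ⊕ β) : Finset α :=
  univ.filter fun i => G.Adj (inl i) v

theorem neighborSet_inr_eq (hbip : IsBipartition G (Set.range inl) (Set.range inr)) (j : β) :
    G.neighborSet (inr j) = inl '' ↑(leftNeighborFinset G (inr j)) := by
  ext (i | j')
  · simp [leftNeighborFinset, adj_comm]
  · simpa using fun h => by simpa using hbip.2.2 h

theorem ncard_neighborSet_inr (hbip : IsBipartition G (Set.range inl) (Set.range inr)) (j : β) :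
    (G.neighborSet (inr j)).ncard = #(leftNeighborFinset G (inr j)) := by
  rw [neighborSet_inr_eq hbip, Set.ncard_image_of_injective _ inl_injective, Set.ncard_coe_finset]

/-- Removing the neighbourhood of `J` isolates each vertex of `J`, and `inr y` lies in a
further component. -/
theorem card_add_one_le_card_biUnion_leftNeighborFinset [DecidableEq α] [Finite β]
    (hbip : IsBipartition G (Set.range inl) (Set.range inr))
    (htough : BTough1 G (Set.range inl) (Set.range inr)) {J : Finset β} (hJ : J.Nonempty)
    {y : β} (hy : y ∉ J) (hJα : #J < Fintype.card α) :
    #J + 1 ≤ #(J.biUnion fun j => leftNeighborFinset G (inr j)) := by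
  set T := J.biUnion fun j => leftNeighborFinset G (inr j)
  by_cases hT : T = univ
  · rw [hT, card_univ]
    omega
  have hS : inl '' (T : Set α) ⊂ Set.range (inl : α → α ⊕ β) := by
    obtain ⟨i, hi⟩ : ∃ i, i ∉ T := by
      by_contra! h
      exact hT (eq_univ_of_forall h)
    refine ⟨Set.image_subset_range _ _, fun hsub => hi ?_⟩
    obtain ⟨i', hi', he⟩ := hsub ⟨i, rfl⟩
    exact inl_injective he ▸ hi'
  have hcomp : #J + 1 ≤ numComp G (inl '' T) := by
    simpa using card_add_one_le_numComp (I := J.map ⟨inr, inr_injective⟩) (y := inr y)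
      (fun v hv => by
        obtain ⟨j, hj, rfl⟩ := mem_map.1 hv
        refine ⟨by simp, ?_⟩
        change G.neighborSet (inr j) ⊆ _
        rw [neighborSet_inr_eq hbip]
        exact Set.image_mono
          (coe_subset.2 (subset_biUnion_of_mem (fun j => leftNeighborFinset G (inr j)) hj)))
      (by simp) (by simpa using hy)
  have := htough _ (Or.inl hS) (by have := hJ.card_pos; omega)
  rw [Set.ncard_image_of_injective _ inl_injective, Set.ncard_coe_finset] at this
  omega

end Bipartite

section

variable {n : ℕ} {H : SimpleGraph (Fin n ⊕ Fin n)}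

/-- `vⱼ` (`j < 3`) goes between `σ (p j)` and its cyclic successor; every other gap receives
some `vᵢ` with `i ≥ 3`. -/
theorem isHamiltonian_of_gaps (hn : 3 ≤ n)
    (hcomp : ∀ i j : Fin n, 3 ≤ (j : ℕ) → H.Adj (inl i) (inr j))
    (σ : Equiv.Perm (Fin n)) {p : Fin 3 → Fin n} (hp : Injective p)
    (hadj : ∀ j, H.Adj (inl (σ (p j))) (inr (Fin.castLE hn j)) ∧
      H.Adj (inl (σ (finRotate n (p j)))) (inr (Fin.castLE hn j))) :
    H.IsHamiltonian := by
  obtain ⟨τ, hτ⟩ := Equiv.Perm.exists_extending_pair p (Fin.castLE hn) hp (Fin.castLE_injective hn)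
  refine isHamiltonian_of_interleave (by omega) σ τ fun i => ?_
  by_cases hi : ∃ j, p j = i
  · obtain ⟨j, rfl⟩ := hi
    rw [hτ]
    exact ⟨(hadj j).1, (hadj j).2.symm⟩
  · have h3 : 3 ≤ (τ i : ℕ) := by
      by_contra! hlt
      exact hi ⟨⟨τ i, hlt⟩, τ.injective (by rw [hτ]; rfl)⟩
    exact ⟨hcomp _ _ h3, (hcomp _ _ h3).symm⟩

theorem isHamiltonian_of_hasConsecutivePairs [DecidableRel H.Adj] (hn : 3 ≤ n)
    (hcomp : ∀ i j : Fin n, 3 ≤ (j : ℕ) → H.Adj (inl i) (inr j))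
    (h : HasConsecutivePairs fun j => leftNeighborFinset H (inr (Fin.castLE hn j))) :
    H.IsHamiltonian := by
  obtain ⟨l, p, hl, hp, hpairs⟩ := h
  choose hlt hpairs using hpairs
  have hlen : l.length ≤ n := by simpa using hl.length_le_card
  obtain ⟨σ, hσ⟩ := Equiv.Perm.exists_extending_pair (Fin.castLE hlen) l.get
    (Fin.castLE_injective _) (List.nodup_iff_injective_get.1 hl)
  have hlt' : ∀ j, p j + 1 < n := fun j => (hlt j).trans_le hlen
  refine isHamiltonian_of_gaps hn hcomp σ (p := fun j => ⟨p j, by linarith [hlt' j]⟩)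
    (fun i j hij => hp (Fin.ext_iff.1 hij)) fun j => ?_
  have := hlt j
  have hrot : finRotate n ⟨p j, by omega⟩ = ⟨p j + 1, by omega⟩ :=
    Fin.ext (by simp only [val_finRotate]; split_ifs <;> omega)
  rw [hrot, show (⟨p j, _⟩ : Fin n) = Fin.castLE hlen ⟨p j, by omega⟩ from rfl,
    show (⟨p j + 1, _⟩ : Fin n) = Fin.castLE hlen ⟨p j + 1, hlt j⟩ from rfl, hσ, hσ]
  simpa [leftNeighborFinset] using hpairs j

theorem card_add_one_le_card_biUnion_of_bTough1 [DecidableRel H.Adj] (hn : 3 < n)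
    (hbip : IsBipartition H (Set.range inl) (Set.range inr))
    (htough : BTough1 H (Set.range inl) (Set.range inr)) {J : Finset (Fin 3)} (hJ : J.Nonempty) :
    #J + 1 ≤ #(J.biUnion fun j => leftNeighborFinset H (inr (Fin.castLE hn.le j))) := by
  have hy : (⟨3, hn⟩ : Fin n) ∉ J.image (Fin.castLE hn.le) := fun h => by
    obtain ⟨x, -, hx⟩ := mem_image.1 h
    have : (x : ℕ) = 3 := congrArg Fin.val hx
    omega
  have hJn : #(J.image (Fin.castLE hn.le)) < Fintype.card (Fin n) := by
    rw [card_image_of_injective _ (Fin.castLE_injective _), Fintype.card_fin]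
    exact (card_le_univ J).trans_lt (by simpa using hn)
  simpa [image_biUnion, card_image_of_injective _ (Fin.castLE_injective _)] using
    card_add_one_le_card_biUnion_leftNeighborFinset hbip htough (hJ.image _) hy hJn

end

/-- Let `n ≥ 16` and let `H` be balanced bipartite containing all edges
`u_i v_j` for `j ≥ 4`, with `d(vᵢ) ≤ 3` for `i = 1, 2, 3`. If `H` has bipartite toughness
at least `1` and no Hamilton cycle, then `d(vᵢ) = 2` for `i = 1, 2, 3`. (Indices 0-based.) -/
theorem stmt15 (n : ℕ) (hn : 16 ≤ n) (H : SimpleGraph (Fin n ⊕ Fin n))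
    (hbip : IsBipartition H (Set.range Sum.inl) (Set.range Sum.inr))
    (hcomp : ∀ i j : Fin n, 3 ≤ (j : ℕ) → H.Adj (Sum.inl i) (Sum.inr j))
    (hdeg : ∀ j : Fin n, (j : ℕ) < 3 → (H.neighborSet (Sum.inr j)).ncard ≤ 3)
    (htough : BTough1 H (Set.range Sum.inl) (Set.range Sum.inr))
    (hham : ¬ H.IsHamiltonian) :
    ∀ j : Fin n, (j : ℕ) < 3 → (H.neighborSet (Sum.inr j)).ncard = 2 := by
  classical
  have hn3 : 3 < n := by omega
  set N : Fin 3 → Finset (Fin n) := fun j => leftNeighborFinset H (inr (Fin.castLE hn3.le j))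
  have hall : ∀ J : Finset (Fin 3), J.Nonempty → #J + 1 ≤ #(J.biUnion N) := fun _ hJ =>
    card_add_one_le_card_biUnion_of_bTough1 hn3 hbip htough hJ
  intro j hj
  obtain ⟨j, rfl⟩ : ∃ j' : Fin 3, Fin.castLE hn3.le j' = j := ⟨⟨j, hj⟩, rfl⟩
  have h2 : 2 ≤ #(N j) := by simpa using hall {j} (singleton_nonempty j)
  have h3 : #(N j) ≤ 3 := by simpa [ncard_neighborSet_inr hbip] using hdeg _ hj
  rw [ncard_neighborSet_inr hbip]
  change #(N j) = 2
  by_contra hne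
  have hdeg3 : 3 ≤ #(N j) := by omega
  exact hham (isHamiltonian_of_hasConsecutivePairs hn3.le hcomp (.of_hall hdeg3 hall))
end
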